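/- arXiv:1310.6482 — 8 statements merged into one kernel-verified Lean document; each statement's English description precedes it below -/
import Mathlib

section
/- Let F be a field, let n ≥ 1 be an integer, and let d ≥ 0. If E ⊆ Fⁿ is a finite set of cardinality strictly less than the binomial coefficient C(d+n, n), then there exists a non-zero polynomial P ∈ F[x₁,…,xₙ] of total degree at most d such that P(x) = 0 for every x ∈ E. -/
/-!
Evaluation at the points of `E` is a linear map from the polynomials of total degree at most `d`
to `F^E`. The monomials of degree at most `d` form a basis of the source, and there are
`C(d + n, n)` of them by stars and bars, so the source has larger dimension than the target
and the kernel contains a nonzero polynomial.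
-/

open MvPolynomial Finset

theorem Finsupp.natCard_setOf_sum_le {σ : Type*} [Fintype σ] (d : ℕ) :
    Nat.card {s : σ →₀ ℕ | (s.sum fun _ e => e) ≤ d} =
      (d + Fintype.card σ).choose (Fintype.card σ) := by
  classical
  have hset : {s : σ →₀ ℕ | (s.sum fun _ e => e) ≤ d} =
      ↑((range (d + 1)).biUnion fun k => (univ : Finset σ).finsuppAntidiag k) := by
    ext s
    simp [Finsupp.sum_fintype]
  rw [hset, Nat.card_coe_set_eq, Set.ncard_coe_finset, card_biUnion]
  · simp only [card_finsuppAntidiag_nat_eq_multichoose, card_univ]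
    exact Nat.sum_range_multichoose d _
  · intro k _ l _ hkl
    exact disjoint_left.2 fun s hk hl =>
      hkl ((mem_finsuppAntidiag.1 hk).1.symm.trans (mem_finsuppAntidiag.1 hl).1)

theorem MvPolynomial.finrank_restrictTotalDegree {σ R : Type*} [Fintype σ] [CommRing R]
    [StrongRankCondition R] (d : ℕ) :
    Module.finrank R (restrictTotalDegree σ R d) =
      (d + Fintype.card σ).choose (Fintype.card σ) := by
  rw [restrictTotalDegree, Module.finrank_eq_nat_card_basis (basisRestrictSupport R _)]
  exact Finsupp.natCard_setOf_sum_le d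

theorem MvPolynomial.exists_ne_zero_totalDegree_le_forall_eval_eq_zero {σ F : Type*}
    [Fintype σ] [Field F] (d : ℕ) (E : Finset (σ → F))
    (hE : E.card < (d + Fintype.card σ).choose (Fintype.card σ)) :
    ∃ P : MvPolynomial σ F, P ≠ 0 ∧ P.totalDegree ≤ d ∧ ∀ x ∈ E, eval x P = 0 := by
  let evalOn : restrictTotalDegree σ F d →ₗ[F] E → F :=
    LinearMap.funLeft F F ((↑) : E → σ → F) ∘ₗ evalₗ F σ ∘ₗ (restrictTotalDegree σ F d).subtype
  have hker : LinearMap.ker evalOn ≠ ⊥ := LinearMap.ker_ne_bot_of_finrank_lt <| by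
    rwa [finrank_restrictTotalDegree, Module.finrank_fintype_fun_eq_card, Fintype.card_coe]
  obtain ⟨⟨P, hPd⟩, hPker, hP0⟩ := (Submodule.ne_bot_iff _).1 hker
  refine ⟨P, fun h => hP0 (Subtype.ext h), (mem_restrictTotalDegree σ d P).1 hPd, ?_⟩
  exact fun x hx => congrFun (LinearMap.mem_ker.1 hPker) ⟨x, hx⟩

theorem interpolation_general (F : Type*) [Field F] (n : ℕ) (d : ℕ)
    (E : Finset (Fin n → F)) (hE : E.card < (d + n).choose n) :
    ∃ P : MvPolynomial (Fin n) F, P ≠ 0 ∧ P.totalDegree ≤ d ∧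
      ∀ x ∈ E, MvPolynomial.eval x P = 0 :=
  exists_ne_zero_totalDegree_le_forall_eval_eq_zero d E (by rwa [Fintype.card_fin])

/-- **Interpolation** (Lemma 1.4). -/
theorem interpolation (F : Type*) [Field F] (n : ℕ) (hn : 1 ≤ n) (d : ℕ)
    (E : Finset (Fin n → F)) (hE : E.card < (d + n).choose n) :
    ∃ P : MvPolynomial (Fin n) F, P ≠ 0 ∧ P.totalDegree ≤ d ∧
      ∀ x ∈ E, MvPolynomial.eval x P = 0 :=
  interpolation_general F n d E hE
end

section
/- Let F be a finite field, let n, d ≥ 1 be integers, and let E ⊆ Fⁿ have the property that for every point x ∈ Fⁿ there exists a nonzero direction v ∈ Fⁿ such that the line {x + t•v : t ∈ F} contains strictly more than d points of E. Then |E| ≥ C(d+n, n). -/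
/-!
Dvir's polynomial method. If `|E| < C(d+n, n)`, the dimension of the space of polynomials of
total degree at most `d` in `n` variables, some nonzero such `P` vanishes on `E`. Restricted to a
line through `x` that meets `E` in more than `d` points, `P` becomes a univariate polynomial of
degree at most `d` with more than `d` roots, so it vanishes identically and `P x = 0`. Hence `P`
vanishes on all of `Fⁿ`; since a line has only `|F|` points, `d < |F|`, which forces `P = 0`.
-/

open scoped Polynomial

def Equiv.sumLeEquivOptionSumEq (σ : Type*) [Fintype σ] (d : ℕ) :
    {f : σ → ℕ // ∑ i, f i ≤ d} ≃ {g : Option σ → ℕ // ∑ i, g i = d} where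
  toFun f := ⟨fun o => o.elim (d - ∑ i, f.1 i) f.1, by
    simp only [Fintype.sum_option, Option.elim_none, Option.elim_some]; have := f.2; omega⟩
  invFun g := ⟨fun i => g.1 (some i), by
    have := g.2; rw [Fintype.sum_option] at this; dsimp only; omega⟩
  left_inv f := rfl
  right_inv g := by
    ext (_ | i)
    · have := g.2; rw [Fintype.sum_option] at this; simp only [Option.elim_none]; omega
    · rfl

theorem Finsupp.natCard_sum_le (σ : Type*) [Fintype σ] (d : ℕ) :
    Nat.card {s : σ →₀ ℕ // (s.sum fun _ e => e) ≤ d} =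
      (d + Fintype.card σ).choose (Fintype.card σ) := by
  classical
  have e : {s : σ →₀ ℕ // (s.sum fun _ e => e) ≤ d} ≃ Sym (Option σ) d :=
    (Finsupp.equivFunOnFinite.subtypeEquiv fun s => by simp [Finsupp.sum_fintype]).trans
      ((Equiv.sumLeEquivOptionSumEq σ d).trans (Sym.equivNatSumOfFintype _ _).symm)
  rw [Nat.card_congr e, Nat.card_eq_fintype_card, Sym.card_sym_eq_choose, Fintype.card_option,
    Nat.add_right_comm, Nat.add_sub_cancel, add_comm, Nat.choose_symm_add]

theorem Set.ncard_inter_line_eq {K M : Type*} [DivisionRing K] [AddCommGroup M] [Module K M]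
    (E : Set M) (x : M) {v : M} (hv : v ≠ 0) :
    (E ∩ {y | ∃ t : K, y = x + t • v}).ncard = ((fun t : K => x + t • v) ⁻¹' E).ncard := by
  have hline : {y | ∃ t : K, y = x + t • v} = Set.range fun t : K => x + t • v := by
    ext y; simp [eq_comm]
  rw [hline, ← Set.image_preimage_eq_inter_range]
  exact Set.ncard_image_of_injective _ ((add_right_injective x).comp (smul_left_injective K hv))

namespace MvPolynomial

section CommRing

variable {σ R : Type*} [CommRing R]

theorem finrank_restrictTotalDegree_s2 [Fintype σ] [Nontrivial R] (d : ℕ) :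
    Module.finrank R (restrictTotalDegree σ R d) =
      (d + Fintype.card σ).choose (Fintype.card σ) := by
  rw [restrictTotalDegree, Module.finrank_eq_nat_card_basis (basisRestrictSupport R _)]
  exact Finsupp.natCard_sum_le σ d

theorem natDegree_aeval_le (P : MvPolynomial σ R) {f : σ → R[X]} {k : ℕ}
    (hf : ∀ i, (f i).natDegree ≤ k) : (aeval f P).natDegree ≤ P.totalDegree * k := by
  conv_lhs => rw [P.as_sum, map_sum]
  refine Polynomial.natDegree_sum_le_of_forall_le _ _ fun s hs => ?_
  rw [aeval_monomial, Polynomial.algebraMap_eq]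
  calc (Polynomial.C (coeff s P) * s.prod fun i e => f i ^ e).natDegree
      ≤ ∑ i ∈ s.support, (f i ^ s i).natDegree :=
        (Polynomial.natDegree_C_mul_le _ _).trans (Polynomial.natDegree_prod_le _ _)
    _ ≤ ∑ i ∈ s.support, s i * k :=
        Finset.sum_le_sum fun i _ =>
          Polynomial.natDegree_pow_le.trans (Nat.mul_le_mul_left _ (hf i))
    _ = (s.sum fun _ e => e) * k := by rw [Finsupp.sum, Finset.sum_mul]
    _ ≤ P.totalDegree * k := Nat.mul_le_mul_right _ (le_totalDegree hs)

theorem eval_aeval (P : MvPolynomial σ R) (f : σ → R[X]) (t : R) :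
    (aeval f P).eval t = eval (fun i => (f i).eval t) P := by
  rw [← Polynomial.coe_aeval_eq_eval, ← AlgHom.comp_apply, comp_aeval]
  rfl

noncomputable def lineRestriction (x v : σ → R) (P : MvPolynomial σ R) : R[X] :=
  aeval (fun i => Polynomial.C (v i) * Polynomial.X + Polynomial.C (x i)) P

theorem eval_lineRestriction (x v : σ → R) (P : MvPolynomial σ R) (t : R) :
    (P.lineRestriction x v).eval t = eval (x + t • v) P := by
  rw [lineRestriction, eval_aeval]
  congr 2 with i
  simp only [Polynomial.eval_add, Polynomial.eval_mul, Polynomial.eval_C, Polynomial.eval_X,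
    Pi.add_apply, Pi.smul_apply, smul_eq_mul]
  ring

theorem natDegree_lineRestriction_le (x v : σ → R) (P : MvPolynomial σ R) :
    (P.lineRestriction x v).natDegree ≤ P.totalDegree :=
  (P.natDegree_aeval_le fun _ => Polynomial.natDegree_linear_le).trans_eq (mul_one _)

theorem eq_zero_of_forall_eval_eq_zero_of_totalDegree_lt_card [Finite σ] [IsDomain R] [Fintype R]
    (P : MvPolynomial σ R) (hP : ∀ x, eval x P = 0) (hdeg : P.totalDegree < Fintype.card R) :
    P = 0 :=
  eq_zero_of_eval_zero_at_prod_finset P (fun _ => Finset.univ)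
    (fun i => (degreeOf_le_totalDegree P i).trans_lt hdeg) fun x _ => hP x

end CommRing

section Field

variable {σ K : Type*} [Field K]

theorem exists_ne_zero_totalDegree_le_forall_eval_eq_zero_s2 [Fintype σ] {E : Set (σ → K)}
    (hfin : E.Finite) (d : ℕ) (hE : E.ncard < (d + Fintype.card σ).choose (Fintype.card σ)) :
    ∃ P : MvPolynomial σ K, P ≠ 0 ∧ P.totalDegree ≤ d ∧ ∀ x ∈ E, eval x P = 0 := by
  have := hfin.fintype
  let restrictToE : restrictTotalDegree σ K d →ₗ[K] E → K :=
    LinearMap.funLeft K K Subtype.val ∘ₗ evalₗ K σ ∘ₗ (restrictTotalDegree σ K d).subtype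
  have hker : LinearMap.ker restrictToE ≠ ⊥ := LinearMap.ker_ne_bot_of_finrank_lt <| by
    rwa [Module.finrank_fintype_fun_eq_card, Fintype.card_eq_nat_card, Nat.card_coe_set_eq,
      finrank_restrictTotalDegree_s2]
  obtain ⟨⟨P, hPd⟩, hPE, hP0⟩ := (Submodule.ne_bot_iff _).mp hker
  exact ⟨P, fun h => hP0 (by simp [h]), (mem_restrictTotalDegree σ d P).mp hPd,
    fun x hx => congrFun hPE ⟨x, hx⟩⟩

theorem eval_eq_zero_of_totalDegree_lt_ncard_inter_line (P : MvPolynomial σ K) {E : Set (σ → K)}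
    (hPE : ∀ y ∈ E, eval y P = 0) {x v : σ → K} (hv : v ≠ 0)
    (hdeg : P.totalDegree < (E ∩ {y | ∃ t : K, y = x + t • v}).ncard) : eval x P = 0 := by
  rw [Set.ncard_inter_line_eq E x hv] at hdeg
  have hfin := Set.finite_of_ncard_pos (hdeg.trans_le' (Nat.zero_le _))
  have hline : P.lineRestriction x v = 0 :=
    Polynomial.eq_zero_of_natDegree_lt_card_of_eval_eq_zero' _ hfin.toFinset
      (fun t ht => by rw [eval_lineRestriction]; exact hPE _ (hfin.mem_toFinset.mp ht))
      ((natDegree_lineRestriction_le x v P).trans_lt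
        (by rwa [← Set.ncard_eq_toFinset_card _ hfin]))
  simpa [eval_lineRestriction] using congrArg (Polynomial.eval 0) hline

end Field

end MvPolynomial

open MvPolynomial in
theorem finite_field_nikodym_general (F : Type*) [Field F] [Fintype F] (n d : ℕ)
    (E : Set (Fin n → F))
    (h : ∀ x : Fin n → F, ∃ v : Fin n → F, v ≠ 0 ∧
      d < (E ∩ {y | ∃ t : F, y = x + t • v}).ncard) :
    (d + n).choose n ≤ E.ncard := by
  by_contra! hE
  obtain ⟨P, hP0, hPd, hPE⟩ := exists_ne_zero_totalDegree_le_forall_eval_eq_zero_s2 (K := F)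
    E.toFinite d (by rwa [Fintype.card_fin])
  have hP : ∀ x, eval x P = 0 := fun x => by
    obtain ⟨v, hv, hd⟩ := h x
    exact P.eval_eq_zero_of_totalDegree_lt_ncard_inter_line hPE hv (hPd.trans_lt hd)
  have hdF : d < Fintype.card F := by
    obtain ⟨v, hv, hd⟩ := h 0
    rw [Set.ncard_inter_line_eq E 0 hv] at hd
    exact hd.trans_le ((Set.ncard_le_card _).trans_eq Nat.card_eq_fintype_card)
  exact hP0 (eq_zero_of_forall_eval_eq_zero_of_totalDegree_lt_card P hP (hPd.trans_lt hdF))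

/-- **Finite field Nikodym conjecture** (Proposition 1.7). -/
theorem finite_field_nikodym (F : Type*) [Field F] [Fintype F] (n d : ℕ)
    (hn : 1 ≤ n) (hd : 1 ≤ d) (E : Set (Fin n → F))
    (h : ∀ x : Fin n → F, ∃ v : Fin n → F, v ≠ 0 ∧
      d < (E ∩ {y | ∃ t : F, y = x + t • v}).ncard) :
    (d + n).choose n ≤ E.ncard :=
  finite_field_nikodym_general F n d E h
end

section
/- Let F be a finite field, let n ≥ 1 be an integer, and let E ⊆ Fⁿ be a Kakeya set. Then |E| ≥ C(|F|+n−1, n); in particular |E| ≥ |F|ⁿ/n!. -/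
/-!
Dvir's polynomial method. If `|E| < C(q - 1 + n, n)`, the dimension of the space of polynomials
of total degree `≤ q - 1` in `n` variables, then some nonzero `P` of degree `D ≤ q - 1` vanishes
on `E`. On a line `x + t • v ⊆ E`, the polynomial `t ↦ P(x + t • v)` has degree `≤ D < q` and
`q` roots, hence is zero; its coefficient of `t ^ D` is `P_D(v)`, where `P_D` is the top
homogeneous part of `P`. So `P_D` vanishes on all of `Fⁿ` (at `0` because `E` is nonempty), and
being homogeneous of degree `< q` it is zero, a contradiction. The bound `qⁿ / n!` follows from
`qⁿ ≤ q (q + 1) ⋯ (q + n - 1) = n! C(q + n - 1, n)`.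
-/

open Polynomial

namespace Finsupp

theorem degree_cons {M : Type*} [AddCommMonoid M] {n : ℕ} (a : M) (d : Fin n →₀ M) :
    (cons a d).degree = a + d.degree := by
  simp [degree_eq_sum, Fin.sum_univ_succ]

noncomputable def degreeLeEquivDegreeEq (n m : ℕ) :
    {d : Fin n →₀ ℕ // d.degree ≤ m} ≃ {e : Fin (n + 1) →₀ ℕ // e.degree = m} where
  toFun d := ⟨cons (m - d.1.degree) d.1, by rw [degree_cons]; have := d.2; omega⟩
  invFun e := ⟨e.1.tail, by have := e.2; rw [← cons_tail e.1, degree_cons] at this; omega⟩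
  left_inv d := by simp [tail_cons]
  right_inv := by
    rintro ⟨e, he⟩
    have h : e 0 + e.tail.degree = m := by rwa [← degree_cons, cons_tail]
    ext1
    dsimp only
    rw [← h, Nat.add_sub_cancel, cons_tail]

theorem natCard_degree_le (n m : ℕ) :
    Nat.card {d : Fin n →₀ ℕ // d.degree ≤ m} = (m + n).choose n := by
  rw [Nat.card_congr ((degreeLeEquivDegreeEq n m).trans (Sym.equivNatSum (Fin (n + 1)) m).symm),
    Nat.card_eq_fintype_card, Sym.card_sym_eq_choose, Fintype.card_fin,
    show n + 1 + m - 1 = m + n by omega, Nat.choose_symm_add]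

end Finsupp

namespace Polynomial

theorem coeff_prod_sum_of_natDegree_le {R ι : Type*} [CommSemiring R] (s : Finset ι)
    (f : ι → R[X]) (d : ι → ℕ) (h : ∀ i ∈ s, (f i).natDegree ≤ d i) :
    (∏ i ∈ s, f i).coeff (∑ i ∈ s, d i) = ∏ i ∈ s, (f i).coeff (d i) := by
  classical
  induction s using Finset.induction_on with
  | empty => simp
  | insert a s ha ih =>
    have hs : ∀ i ∈ s, (f i).natDegree ≤ d i := fun i hi ↦ h i (Finset.mem_insert_of_mem hi)
    rw [Finset.prod_insert ha, Finset.sum_insert ha, Finset.prod_insert ha,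
      coeff_mul_add_eq_of_natDegree_le (h a (s.mem_insert_self a))
        ((natDegree_prod_le _ _).trans (Finset.sum_le_sum hs)), ih hs]

end Polynomial

namespace MvPolynomial

section RestrictToLine

variable {R σ : Type*} [CommSemiring R]

noncomputable def restrictToLine (x v : σ → R) : MvPolynomial σ R →ₐ[R] R[X] :=
  aeval fun i ↦ Polynomial.C (v i) * Polynomial.X + Polynomial.C (x i)

variable (x v : σ → R)

theorem eval_restrictToLine (P : MvPolynomial σ R) (t : R) :
    (restrictToLine x v P).eval t = eval (x + t • v) P := by
  rw [← Polynomial.coe_aeval_eq_eval, restrictToLine, ← AlgHom.comp_apply, comp_aeval,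
    ← aeval_eq_eval]
  congr 2 with i
  simp only [map_add, map_mul, Polynomial.aeval_C, Polynomial.aeval_X, Pi.add_apply,
    Pi.smul_apply, smul_eq_mul, Algebra.algebraMap_self, RingHom.id_apply]
  ring

theorem restrictToLine_monomial (d : σ →₀ ℕ) (c : R) :
    restrictToLine x v (monomial d c) =
      Polynomial.C c *
        ∏ i ∈ d.support, (Polynomial.C (v i) * Polynomial.X + Polynomial.C (x i)) ^ d i := by
  rw [restrictToLine, aeval_monomial, Finsupp.prod, Polynomial.algebraMap_eq]

theorem natDegree_restrictToLine_monomial_le (d : σ →₀ ℕ) (c : R) :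
    (restrictToLine x v (monomial d c)).natDegree ≤ d.degree := by
  rw [restrictToLine_monomial, Finsupp.degree_apply]
  refine (natDegree_C_mul_le _ _).trans ((natDegree_prod_le _ _).trans
    (Finset.sum_le_sum fun i _ ↦ ?_))
  simpa using natDegree_pow_le_of_le (d i) natDegree_linear_le

theorem coeff_restrictToLine_monomial_degree (d : σ →₀ ℕ) (c : R) :
    (restrictToLine x v (monomial d c)).coeff d.degree = eval v (monomial d c) := by
  rw [restrictToLine_monomial, Finsupp.degree_apply, Polynomial.coeff_C_mul, eval_monomial,
    Finsupp.prod, coeff_prod_sum_of_natDegree_le _ _ _ fun i _ ↦ by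
      simpa using natDegree_pow_le_of_le (d i) natDegree_linear_le]
  congr 1
  refine Finset.prod_congr rfl fun i _ ↦ ?_
  simpa using coeff_pow_of_natDegree_le (m := d i) (natDegree_linear_le (a := v i) (b := x i))

theorem natDegree_restrictToLine_le (P : MvPolynomial σ R) :
    (restrictToLine x v P).natDegree ≤ P.totalDegree := by
  conv_lhs => rw [P.as_sum, map_sum]
  exact natDegree_sum_le_of_forall_le _ _ fun d hd ↦
    (natDegree_restrictToLine_monomial_le x v d _).trans (le_totalDegree hd)

theorem coeff_restrictToLine_of_totalDegree_le {P : MvPolynomial σ R} {D : ℕ}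
    (hP : P.totalDegree ≤ D) :
    (restrictToLine x v P).coeff D = eval v (homogeneousComponent D P) := by
  conv_lhs => rw [P.as_sum, map_sum, finsetSum_coeff]
  conv_rhs => rw [P.as_sum, map_sum, map_sum]
  refine Finset.sum_congr rfl fun d hd ↦ ?_
  rw [homogeneousComponent_of_mem (isHomogeneous_monomial _ rfl)]
  split_ifs with hD
  · rw [hD, coeff_restrictToLine_monomial_degree]
  · rw [map_zero, coeff_eq_zero_of_natDegree_lt]
    exact (natDegree_restrictToLine_monomial_le x v d _).trans_lt
      (lt_of_le_of_ne ((le_totalDegree hd).trans hP) (Ne.symm hD))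

end RestrictToLine

theorem homogeneousComponent_totalDegree_ne_zero {R σ : Type*} [CommSemiring R]
    {P : MvPolynomial σ R} (hP : P ≠ 0) : homogeneousComponent P.totalDegree P ≠ 0 := by
  obtain ⟨d, hd, hdeg⟩ := P.support.exists_mem_eq_sup (support_nonempty.mpr hP) Finsupp.degree
  intro h
  have hcoeff := congrArg (coeff d) h
  rw [coeff_homogeneousComponent, if_pos (show d.degree = P.totalDegree from hdeg.symm),
    coeff_zero] at hcoeff
  exact mem_support_iff.mp hd hcoeff

theorem finrank_restrictTotalDegree_s3 (R : Type*) [CommRing R] [Nontrivial R] (n m : ℕ) :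
    Module.finrank R (restrictTotalDegree (Fin n) R m) = (m + n).choose n := by
  rw [restrictTotalDegree, Module.finrank_eq_nat_card_basis (basisRestrictSupport R _)]
  exact Finsupp.natCard_degree_le n m

theorem exists_ne_zero_totalDegree_le_eval_eq_zero {K : Type*} [Field K] {n m : ℕ}
    {S : Set (Fin n → K)} (hS : S.Finite) (hcard : S.ncard < (m + n).choose n) :
    ∃ P : MvPolynomial (Fin n) K,
      P ≠ 0 ∧ P.totalDegree ≤ m ∧ ∀ x ∈ S, eval x P = 0 := by
  have := hS.fintype
  let L : restrictTotalDegree (Fin n) K m →ₗ[K] S → K :=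
    LinearMap.funLeft K K Subtype.val ∘ₗ evalₗ K (Fin n) ∘ₗ
      (restrictTotalDegree (Fin n) K m).subtype
  have hL : ¬ Function.Injective L := fun hinj ↦ by
    have := LinearMap.finrank_le_finrank_of_injective hinj
    rw [finrank_restrictTotalDegree_s3, Module.finrank_fintype_fun_eq_card,
      ← Nat.card_eq_fintype_card, Nat.card_coe_set_eq] at this
    omega
  rw [← LinearMap.ker_eq_bot] at hL
  obtain ⟨⟨P, hPm⟩, hPker, hP0⟩ := Submodule.exists_mem_ne_zero_of_ne_bot hL
  refine ⟨P, by simpa using hP0, (mem_restrictTotalDegree _ _ _).mp hPm, fun x hx ↦ ?_⟩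
  simpa [L, evalₗ] using congrFun hPker ⟨x, hx⟩

section FiniteField

variable {K σ : Type*} [Field K] [Fintype K]

theorem eval_homogeneousComponent_eq_zero_of_forall_eval_line {P : MvPolynomial σ K} {D : ℕ}
    (hP : P.totalDegree ≤ D) (hD : D < Fintype.card K) {x v : σ → K}
    (hline : ∀ t : K, eval (x + t • v) P = 0) : eval v (homogeneousComponent D P) = 0 := by
  have hzero : restrictToLine x v P = 0 :=
    Polynomial.eq_zero_of_natDegree_lt_card_of_eval_eq_zero _ Function.injective_id
      (fun t ↦ (eval_restrictToLine x v P t).trans (hline t))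
      ((natDegree_restrictToLine_le x v P).trans_lt (hP.trans_lt hD))
  rw [← coeff_restrictToLine_of_totalDegree_le x v hP, hzero, Polynomial.coeff_zero]

theorem eq_zero_of_forall_eval_eq_zero_of_forall_line {S : Set (σ → K)}
    (hS : ∀ v, ∃ x, ∀ t : K, x + t • v ∈ S) {P : MvPolynomial σ K}
    (hP : P.totalDegree < Fintype.card K) (hPS : ∀ x ∈ S, eval x P = 0) : P = 0 := by
  by_contra hP0
  refine homogeneousComponent_totalDegree_ne_zero hP0 <|
    (homogeneousComponent_isHomogeneous _ _).eq_zero_of_forall_eval_eq_zero_of_le_card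
      (fun v ↦ ?_) (by rw [Cardinal.mk_fintype]; exact_mod_cast hP.le)
  obtain ⟨x, hx⟩ := hS v
  exact eval_homogeneousComponent_eq_zero_of_forall_eval_line le_rfl hP fun t ↦ hPS _ (hx t)

end FiniteField

end MvPolynomial

/-- **Finite field Kakeya conjecture** (Theorem 1.8, Dvir). -/
theorem finite_field_kakeya (F : Type*) [Field F] [Fintype F] (n : ℕ) (hn : 1 ≤ n)
    (E : Set (Fin n → F))
    (hE : ∀ v : Fin n → F, v ≠ 0 → ∃ x : Fin n → F, ∀ t : F, x + t • v ∈ E) :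
    (Fintype.card F + n - 1).choose n ≤ E.ncard ∧
      Fintype.card F ^ n ≤ n.factorial * E.ncard := by
  set q := Fintype.card F
  have hlines : ∀ v : Fin n → F, ∃ x, ∀ t : F, x + t • v ∈ E := by
    intro v
    obtain rfl | hv := eq_or_ne v 0
    · obtain ⟨x, hx⟩ := hE (Pi.single ⟨0, hn⟩ 1) (by simp)
      exact ⟨x, fun t ↦ by simpa using hx 0⟩
    · exact hE v hv
  have hbound : (q + n - 1).choose n ≤ E.ncard := by
    by_contra! hlt
    have hq : 1 ≤ q := Fintype.card_pos
    obtain ⟨P, hP0, hPdeg, hPE⟩ := MvPolynomial.exists_ne_zero_totalDegree_le_eval_eq_zero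
      (m := q - 1) E.toFinite (by rwa [← Nat.sub_add_comm hq])
    exact hP0 (MvPolynomial.eq_zero_of_forall_eval_eq_zero_of_forall_line hlines (by omega) hPE)
  refine ⟨hbound, ?_⟩
  calc q ^ n ≤ q.ascFactorial n := Nat.pow_succ_le_ascFactorial q n
    _ = n.factorial * (q + n - 1).choose n := Nat.ascFactorial_eq_factorial_mul_choose' q n
    _ ≤ n.factorial * E.ncard := Nat.mul_le_mul_left _ hbound
end

section
/- Let F be a field, let d₁, d₂ ≥ 0, and let P₁, P₂ ∈ F[x, y] be polynomials of total degrees d₁ and d₂ respectively, having no common non-constant factor. Then the set {(x, y) ∈ F² : P₁(x, y) = 0 and P₂(x, y) = 0} has cardinality at most d₁·d₂. -/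
/-!
Let `S` be a set of `m` common zeros, `dᵢ = deg Pᵢ`, `n = d₁ + d₂ + m`, and let `V k` be the space
of polynomials of total degree `≤ k`, of dimension `(k + 1)(k + 2) / 2`. The map
`(A, B) ↦ P₁ A + P₂ B` from `V (d₂ + m) × V (d₁ + m)` to `V n` has kernel
`{(P₂ C, -P₁ C) : C ∈ V m}` because `P₁` and `P₂` are coprime, and its image lies in the subspace of
polynomials vanishing on `S`, which has codimension `m` by Lagrange interpolation. Hence
`m ≤ dim V n + dim V m - dim V (d₁ + m) - dim V (d₂ + m) = d₁ d₂`.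
-/

open MvPolynomial Module Finset

theorem Set.finite_and_ncard_le_of_forall_finset_card_le {α : Type*} {s : Set α} {N : ℕ}
    (h : ∀ t : Finset α, ↑t ⊆ s → #t ≤ N) : s.Finite ∧ s.ncard ≤ N := by
  have hfin : s.Finite := by
    by_contra hinf
    obtain ⟨t, hts, hcard⟩ := Set.Infinite.exists_subset_card_eq hinf (N + 1)
    have := h t hts
    omega
  refine ⟨hfin, ?_⟩
  rw [Set.ncard_eq_toFinset_card _ hfin]
  exact h _ (by simp)

theorem two_mul_ncard_setOf_add_le (k : ℕ) :
    2 * {p : ℕ × ℕ | p.1 + p.2 ≤ k}.ncard = (k + 1) * (k + 2) := by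
  rw [show {p : ℕ × ℕ | p.1 + p.2 ≤ k} = ↑((range (k + 1)).biUnion antidiagonal) by ext; simp,
    Set.ncard_coe_finset, card_biUnion fun i _ j _ hij => disjoint_left.2 fun p hi hj =>
    hij ((mem_antidiagonal.1 hi).symm.trans (mem_antidiagonal.1 hj))]
  simp only [Nat.card_antidiagonal]
  induction k with
  | zero => rfl
  | succ k ih => rw [sum_range_succ, mul_add, ih]; ring

theorem IsRelPrime.exists_eq_mul_of_mul_add_mul_eq_zero {R : Type*} [CommRing R] [IsDomain R]
    [DecompositionMonoid R] {a b x y : R} (h : IsRelPrime a b) (hb : b ≠ 0)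
    (hxy : a * x + b * y = 0) : ∃ c, x = b * c ∧ y = -(a * c) := by
  obtain ⟨c, rfl⟩ : b ∣ x := h.symm.dvd_of_dvd_mul_left ⟨-y, by linear_combination hxy⟩
  refine ⟨c, rfl, ?_⟩
  have : b * (y + a * c) = 0 := by linear_combination hxy
  linear_combination (mul_eq_zero.mp this).resolve_left hb

namespace MvPolynomial

section CommSemiring

variable {σ R : Type*} [CommSemiring R]

noncomputable def mulLeftRestrictTotalDegree (P : MvPolynomial σ R) {k l : ℕ}
    (h : P.totalDegree + k ≤ l) : restrictTotalDegree σ R k →ₗ[R] restrictTotalDegree σ R l :=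
  (LinearMap.mulLeft R P).restrict fun q hq => by
    rw [mem_restrictTotalDegree] at hq ⊢
    exact (totalDegree_mul P q).trans (by omega)

@[simp]
theorem coe_mulLeftRestrictTotalDegree_apply (P : MvPolynomial σ R) {k l : ℕ}
    (h : P.totalDegree + k ≤ l) (q : restrictTotalDegree σ R k) :
    (mulLeftRestrictTotalDegree P h q : MvPolynomial σ R) = P * q :=
  rfl

noncomputable def evalRestrictTotalDegree (S : Set (σ → R)) (n : ℕ) :
    restrictTotalDegree σ R n →ₗ[R] (S → R) :=
  LinearMap.pi fun s => (aeval (s : σ → R)).toLinearMap ∘ₗ (restrictTotalDegree σ R n).subtype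

@[simp]
theorem evalRestrictTotalDegree_apply (S : Set (σ → R)) (n : ℕ) (q : restrictTotalDegree σ R n)
    (s : S) : evalRestrictTotalDegree S n q s = eval (s : σ → R) q := by
  simp [evalRestrictTotalDegree]

end CommSemiring

section Field

variable {σ F : Type*} [Field F]

theorem exists_totalDegree_le_one_eval_eq_one_eval_eq_zero {s t : σ → F} (h : s ≠ t) :
    ∃ L : MvPolynomial σ F, L.totalDegree ≤ 1 ∧ eval s L = 1 ∧ eval t L = 0 := by
  obtain ⟨i, hi⟩ := Function.ne_iff.mp h
  refine ⟨C (s i - t i)⁻¹ * (X i - C (t i)), ?_, ?_, by simp⟩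
  · calc _ ≤ (C (s i - t i)⁻¹).totalDegree + (X i - C (t i)).totalDegree := totalDegree_mul _ _
      _ ≤ 0 + 1 := add_le_add (totalDegree_C _).le
          ((totalDegree_sub_C_le _ _).trans (totalDegree_X i).le)
  · simp [inv_mul_cancel₀ (sub_ne_zero.mpr hi)]

theorem exists_totalDegree_le_card_eval_eq_one_eval_eq_zero {s : σ → F} {T : Finset (σ → F)}
    (hs : s ∉ T) :
    ∃ Q : MvPolynomial σ F, Q.totalDegree ≤ #T ∧ eval s Q = 1 ∧ ∀ t ∈ T, eval t Q = 0 := by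
  choose! L hL using fun t (ht : t ∈ T) =>
    exists_totalDegree_le_one_eval_eq_one_eval_eq_zero (ne_of_mem_of_not_mem ht hs).symm
  refine ⟨∏ t ∈ T, L t, ?_, ?_, fun t ht => ?_⟩
  · calc _ ≤ ∑ t ∈ T, (L t).totalDegree := totalDegree_finsetProd _ _
      _ ≤ ∑ _t ∈ T, 1 := sum_le_sum fun t ht => (hL t ht).1
      _ = #T := (card_eq_sum_ones T).symm
  · simp only [map_prod]
    exact prod_eq_one fun t ht => (hL t ht).2.1
  · simp only [map_prod]
    exact prod_eq_zero ht (hL t ht).2.2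

theorem surjective_evalRestrictTotalDegree {S : Finset (σ → F)} {n : ℕ}
    (hS : #S ≤ n + 1) : Function.Surjective (evalRestrictTotalDegree (S : Set (σ → F)) n) := by
  classical
  rw [← LinearMap.range_eq_top, Submodule.eq_top_iff']
  intro g
  rw [← Finset.univ_sum_single g]
  refine Submodule.sum_mem _ fun s _ => ?_
  rw [← mul_one (g s), ← smul_eq_mul, Pi.single_smul']
  refine Submodule.smul_mem _ _ ?_
  obtain ⟨Q, hQdeg, hQs, hQ⟩ := exists_totalDegree_le_card_eval_eq_one_eval_eq_zero
    (Finset.notMem_erase (s : σ → F) S)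
  have hQmem : Q ∈ restrictTotalDegree σ F n := by
    rw [mem_restrictTotalDegree]
    have := card_erase_of_mem s.2
    omega
  refine ⟨⟨Q, hQmem⟩, ?_⟩
  ext t
  rw [evalRestrictTotalDegree_apply]
  by_cases hts : t = s
  · subst hts; simpa using hQs
  · rw [Pi.single_eq_of_ne hts]
    exact hQ t (mem_erase.mpr ⟨fun h => hts (Subtype.ext h), t.2⟩)

theorem isRelPrime_of_not_exists_totalDegree_pos_dvd [Nonempty σ] {P₁ P₂ : MvPolynomial σ F}
    (h : ¬∃ Q : MvPolynomial σ F, 0 < Q.totalDegree ∧ Q ∣ P₁ ∧ Q ∣ P₂) :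
    IsRelPrime P₁ P₂ := by
  intro Q h₁ h₂
  have hQ : Q.totalDegree = 0 := by
    by_contra hQ
    exact h ⟨Q, Nat.pos_of_ne_zero hQ, h₁, h₂⟩
  rw [totalDegree_eq_zero_iff_eq_C] at hQ
  rw [hQ]
  refine (isUnit_iff_ne_zero.mpr fun h₀ => h ?_).map C
  obtain ⟨i⟩ := ‹Nonempty σ›
  rw [hQ, h₀, map_zero, zero_dvd_iff] at h₁ h₂
  exact ⟨X i, by simp, by simp [h₁], by simp [h₂]⟩

variable (P₁ P₂ : MvPolynomial σ F) (m : ℕ)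

local notation "V" => restrictTotalDegree σ F

noncomputable def mulAddMulRestrictTotalDegree :
    V (P₂.totalDegree + m) × V (P₁.totalDegree + m) →ₗ[F]
      V (P₁.totalDegree + P₂.totalDegree + m) :=
  (mulLeftRestrictTotalDegree P₁ (by omega)).coprod (mulLeftRestrictTotalDegree P₂ (by omega))

noncomputable def syzygyRestrictTotalDegree :
    V m →ₗ[F] V (P₂.totalDegree + m) × V (P₁.totalDegree + m) :=
  (mulLeftRestrictTotalDegree P₂ le_rfl).prod (-mulLeftRestrictTotalDegree P₁ le_rfl)

variable {P₁ P₂}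

theorem injective_syzygyRestrictTotalDegree (hP₂ : P₂ ≠ 0) :
    Function.Injective (syzygyRestrictTotalDegree P₁ P₂ m) := by
  intro C₁ C₂ h
  exact Subtype.ext (mul_left_cancel₀ hP₂ (congrArg (fun AB => (AB.1 : MvPolynomial σ F)) h))

theorem ker_mulAddMulRestrictTotalDegree (hP₂ : P₂ ≠ 0) (h : IsRelPrime P₁ P₂) :
    LinearMap.ker (mulAddMulRestrictTotalDegree P₁ P₂ m) =
      LinearMap.range (syzygyRestrictTotalDegree P₁ P₂ m) := by
  ext ⟨⟨A, hA⟩, ⟨B, hB⟩⟩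
  rw [LinearMap.mem_ker, LinearMap.mem_range]
  constructor
  · intro hAB
    obtain ⟨C, rfl, rfl⟩ := h.exists_eq_mul_of_mul_add_mul_eq_zero hP₂ (congrArg Subtype.val hAB)
    have hC : C ∈ V m := by
      rw [mem_restrictTotalDegree] at hA ⊢
      rcases eq_or_ne C 0 with rfl | hC
      · simp
      · rw [totalDegree_mul_of_isDomain hP₂ hC] at hA
        omega
    exact ⟨⟨C, hC⟩, rfl⟩
  · rintro ⟨C, hC⟩
    rw [← hC]
    exact Subtype.ext (show P₁ * (P₂ * C) + P₂ * -(P₁ * C) = 0 by ring)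

theorem finrank_ker_mulAddMulRestrictTotalDegree (hP₂ : P₂ ≠ 0) (h : IsRelPrime P₁ P₂) :
    finrank F (LinearMap.ker (mulAddMulRestrictTotalDegree P₁ P₂ m)) = finrank F (V m) := by
  rw [ker_mulAddMulRestrictTotalDegree m hP₂ h,
    LinearMap.finrank_range_of_inj (injective_syzygyRestrictTotalDegree m hP₂)]

end Field

theorem two_mul_finrank_restrictTotalDegree_fin_two (F : Type*) [Field F] (k : ℕ) :
    2 * finrank F (restrictTotalDegree (Fin 2) F k) = (k + 1) * (k + 2) := by
  rw [restrictTotalDegree, finrank_eq_nat_card_basis (basisRestrictSupport F _),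
    ← two_mul_ncard_setOf_add_le k, ← Nat.card_coe_set_eq]
  congr 1
  refine Nat.card_congr ((Finsupp.equivFunOnFinite.trans (finTwoArrowEquiv ℕ)).subtypeEquiv ?_)
  intro d
  simp [Finsupp.sum_fintype, Fin.sum_univ_two]

theorem card_le_totalDegree_mul_of_ne_zero {F : Type*} [Field F]
    {P₁ P₂ : MvPolynomial (Fin 2) F} (hP₂ : P₂ ≠ 0) (h : IsRelPrime P₁ P₂) {S : Finset (Fin 2 → F)}
    (hS : ∀ s ∈ S, eval s P₁ = 0 ∧ eval s P₂ = 0) :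
    #S ≤ P₁.totalDegree * P₂.totalDegree := by
  let φ := mulAddMulRestrictTotalDegree P₁ P₂ #S
  let ev := evalRestrictTotalDegree (S : Set (Fin 2 → F)) (P₁.totalDegree + P₂.totalDegree + #S)
  have range_le_ker : LinearMap.range φ ≤ LinearMap.ker ev := by
    rintro _ ⟨⟨A, B⟩, rfl⟩
    ext s
    simp [φ, ev, mulAddMulRestrictTotalDegree, evalRestrictTotalDegree, (hS s s.2).1,
      (hS s s.2).2]
  have rank_φ : finrank F (LinearMap.range φ) + finrank F (restrictTotalDegree (Fin 2) F #S) =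
      finrank F (restrictTotalDegree (Fin 2) F (P₂.totalDegree + #S)) +
        finrank F (restrictTotalDegree (Fin 2) F (P₁.totalDegree + #S)) := by
    rw [← finrank_ker_mulAddMulRestrictTotalDegree #S hP₂ h,
      LinearMap.finrank_range_add_finrank_ker, finrank_prod]
  have rank_ev : finrank F (LinearMap.ker ev) + #S =
      finrank F (restrictTotalDegree (Fin 2) F (P₁.totalDegree + P₂.totalDegree + #S)) := by
    rw [← LinearMap.finrank_range_add_finrank_ker ev, add_comm,
      LinearMap.range_eq_top.mpr (surjective_evalRestrictTotalDegree (by omega)), finrank_top,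
      finrank_fintype_fun_eq_card]
    simp
  have hle := Submodule.finrank_mono range_le_ker
  have dim := two_mul_finrank_restrictTotalDegree_fin_two F
  linarith [dim (P₁.totalDegree + P₂.totalDegree + #S), dim #S, dim (P₁.totalDegree + #S),
    dim (P₂.totalDegree + #S)]

theorem card_le_totalDegree_mul {F : Type*} [Field F] {P₁ P₂ : MvPolynomial (Fin 2) F}
    (h : IsRelPrime P₁ P₂) {S : Finset (Fin 2 → F)}
    (hS : ∀ s ∈ S, eval s P₁ = 0 ∧ eval s P₂ = 0) :
    #S ≤ P₁.totalDegree * P₂.totalDegree := by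
  rcases eq_or_ne P₂ 0 with rfl | hP₂
  · have hP₁ : IsUnit P₁ := isRelPrime_zero_right.mp h
    rw [eq_empty_of_forall_notMem fun s hs => ((hP₁.map (eval s)).ne_zero (hS s hs).1)]
    simp
  · exact card_le_totalDegree_mul_of_ne_zero hP₂ h hS

end MvPolynomial

/-- **Bezout's theorem** (Theorem 4.1). -/
theorem bezout (F : Type*) [Field F] (d₁ d₂ : ℕ)
    (P₁ P₂ : MvPolynomial (Fin 2) F)
    (h₁ : P₁.totalDegree = d₁) (h₂ : P₂.totalDegree = d₂)
    (hcoprime : ¬∃ Q : MvPolynomial (Fin 2) F, 0 < Q.totalDegree ∧ Q ∣ P₁ ∧ Q ∣ P₂) :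
    {x : Fin 2 → F | MvPolynomial.eval x P₁ = 0 ∧ MvPolynomial.eval x P₂ = 0}.Finite ∧
      {x : Fin 2 → F | MvPolynomial.eval x P₁ = 0 ∧
        MvPolynomial.eval x P₂ = 0}.ncard ≤ d₁ * d₂ := by
  subst h₁ h₂
  refine Set.finite_and_ncard_le_of_forall_finset_card_le fun S hS => ?_
  exact card_le_totalDegree_mul (isRelPrime_of_not_exists_totalDegree_pos_dvd hcoprime)
    fun s hs => hS hs
end

section
/- Let F be a field, let d₁,…,dₙ ≥ 0 be integers, and let P ∈ F[x₁,…,xₙ] be a polynomial of total degree at most d₁ + ⋯ + dₙ whose coefficient of the monomial x₁^{d₁}⋯xₙ^{dₙ} is non-zero. Then for any sets E₁,…,Eₙ ⊆ F with |Eᵢ| > dᵢ for each i = 1,…,n, there exists a point (x₁,…,xₙ) ∈ E₁ × ⋯ × Eₙ with P(x₁,…,xₙ) ≠ 0. -/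
open MvPolynomial

theorem Finsupp.degree_equivFunOnFinite_symm {ι : Type*} [Fintype ι] (d : ι → ℕ) :
    (Finsupp.equivFunOnFinite.symm d).degree = ∑ i, d i := by
  rw [Finsupp.degree_eq_sum]
  rfl

/-- **Combinatorial nullstellensatz** (Theorem 5.2, Alon). -/
theorem combinatorial_nullstellensatz (F : Type*) [Field F] (n : ℕ)
    (d : Fin n → ℕ) (P : MvPolynomial (Fin n) F)
    (hdeg : P.totalDegree ≤ ∑ i, d i)
    (hcoeff : P.coeff (Finsupp.equivFunOnFinite.symm d) ≠ 0)
    (E : Fin n → Finset F) (hE : ∀ i, d i < (E i).card) :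
    ∃ x : Fin n → F, (∀ i, x i ∈ E i) ∧ MvPolynomial.eval x P ≠ 0 := by
  have hdegree := Finsupp.degree_equivFunOnFinite_symm d
  have hdeg_eq : P.totalDegree = (Finsupp.equivFunOnFinite.symm d).degree :=
    le_antisymm (hdegree ▸ hdeg) (le_totalDegree (mem_support_iff.mpr hcoeff))
  exact combinatorial_nullstellensatz_exists_eval_nonzero P _ hcoeff hdeg_eq E hE
end

section
/- Let p be a prime, let F = ℤ/pℤ, and let A, B ⊆ F be non-empty finite sets with |A| ≠ |B|. Then the restricted sumset {a + b : a ∈ A, b ∈ B, a ≠ b} has cardinality at least min(|A| + |B| − 2, p). -/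
/-!
Following Alon–Nathanson–Ruzsa: suppose `|A| = i + 2`, `|B| = j + 2` and the restricted sumset
`D` has at most `i + j + 1` elements. Padding `D` to a multiset `M` of exactly `i + j + 1` roots,
the polynomial `(x - y) ∏_{c ∈ M} (x + y - c)` vanishes on `A × B`. Its top-degree part is
`(x - y) (x + y)^(i + j + 1)`, whose coefficient of `x^(i+1) y^(j+1)` is
`C(i+j+1, i) - C(i+j+1, i+1)`; this is nonzero mod `p` when `i ≠ j` and `i + j + 1 < p`, because
the two binomials have ratio `(i + 1) / (j + 1)`. The combinatorial Nullstellensatz then gives a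
contradiction. Singletons are handled directly, and when `|A| + |B| - 2 > p` one passes to
subsets whose sizes are distinct and add up to `p + 2`.
-/

open Finset MvPolynomial

namespace Finset

variable {α : Type*}

section

variable [DecidableEq α]

def restrictedSumset [Add α] (A B : Finset α) : Finset α :=
  ((A ×ˢ B).filter fun x => x.1 ≠ x.2).image fun x => x.1 + x.2

theorem mem_restrictedSumset [Add α] {A B : Finset α} {x : α} :
    x ∈ restrictedSumset A B ↔ ∃ a ∈ A, ∃ b ∈ B, a ≠ b ∧ a + b = x := by
  simp [restrictedSumset, and_assoc]

theorem restrictedSumset_mono [Add α] {A A' B B' : Finset α} (hA : A ⊆ A') (hB : B ⊆ B') :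
    restrictedSumset A B ⊆ restrictedSumset A' B' := by
  intro x
  simp only [mem_restrictedSumset]
  rintro ⟨a, ha, b, hb, hab, rfl⟩
  exact ⟨a, hA ha, b, hB hb, hab, rfl⟩

theorem restrictedSumset_comm [AddCommMagma α] (A B : Finset α) :
    restrictedSumset A B = restrictedSumset B A := by
  ext x
  simp only [mem_restrictedSumset]
  constructor <;> rintro ⟨a, ha, b, hb, hab, rfl⟩ <;>
    exact ⟨b, hb, a, ha, hab.symm, add_comm _ _⟩

theorem card_sub_one_le_card_restrictedSumset_singleton [AddLeftCancelSemigroup α] (a : α)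
    (B : Finset α) : #B - 1 ≤ #(restrictedSumset {a} B) := by
  have hsub : (B.erase a).image (a + ·) ⊆ restrictedSumset {a} B := by
    intro x hx
    obtain ⟨b, hb, rfl⟩ := mem_image.mp hx
    exact mem_restrictedSumset.mpr
      ⟨a, mem_singleton_self a, b, mem_of_mem_erase hb, (ne_of_mem_erase hb).symm, rfl⟩
  calc #B - 1 ≤ #(B.erase a) := pred_card_le_card_erase
    _ = #((B.erase a).image (a + ·)) := (card_image_of_injective _ (add_right_injective a)).symm
    _ ≤ #(restrictedSumset {a} B) := card_le_card hsub

end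

theorem exists_subset_subset_card_add_eq {A B : Finset α} (hA : A.Nonempty) (hB : B.Nonempty)
    (hAB : #A ≠ #B) {n : ℕ} (hn : 3 ≤ n) (hnAB : n ≤ #A + #B) :
    ∃ A' ⊆ A, ∃ B' ⊆ B, A'.Nonempty ∧ B'.Nonempty ∧ #A' ≠ #B' ∧ #A' + #B' = n := by
  have hA1 := hA.card_pos
  have hB1 := hB.card_pos
  obtain ⟨k, l, hkA, hlB, hk, hl, hkl, hkln⟩ :
      ∃ k l, k ≤ #A ∧ l ≤ #B ∧ 0 < k ∧ 0 < l ∧ k ≠ l ∧ k + l = n := by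
    by_cases hAn : n - 1 ≤ #A
    · exact ⟨n - 1, 1, by omega⟩
    by_cases hAB2 : 2 * #A = n
    · exact ⟨#A - 1, #A + 1, by omega⟩
    · exact ⟨#A, n - #A, by omega⟩
  obtain ⟨A', hA', rfl⟩ := exists_subset_card_eq hkA
  obtain ⟨B', hB', rfl⟩ := exists_subset_card_eq hlB
  exact ⟨A', hA', B', hB', card_pos.mp hk, card_pos.mp hl, hkl, hkln⟩

end Finset

theorem ZMod.natCast_choose_ne_natCast_choose_succ {p : ℕ} [Fact p.Prime] {i j : ℕ}
    (hij : i ≠ j) (hp : i + j + 1 < p) :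
    ((i + j + 1).choose i : ZMod p) ≠ (i + j + 1).choose (i + 1) := by
  intro h
  have hrec : (i + j + 1).choose (i + 1) * (i + 1) = (i + j + 1).choose i * (j + 1) := by
    rw [Nat.choose_succ_right_eq, show i + j + 1 - i = j + 1 by omega]
  have hchoose : ((i + j + 1).choose i : ZMod p) ≠ 0 := by
    rw [Ne, ZMod.natCast_eq_zero_iff]
    exact (Nat.Prime.coprime_iff_not_dvd Fact.out).mp
      (Nat.Prime.coprime_choose_of_lt Fact.out hp (by omega))
  have hsucc : ((i + 1 : ℕ) : ZMod p) = (j + 1 : ℕ) := by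
    refine mul_left_cancel₀ hchoose ?_
    rw [← Nat.cast_mul, ← Nat.cast_mul, ← hrec]
    simp only [Nat.cast_mul, h]
  rw [ZMod.natCast_eq_natCast_iff', Nat.mod_eq_of_lt (by omega), Nat.mod_eq_of_lt (by omega)]
    at hsucc
  omega

namespace MvPolynomial

variable {σ R : Type*} [CommRing R]

theorem totalDegree_prod_sub_C_le {L : MvPolynomial σ R} (hL : L.totalDegree ≤ 1)
    (M : Multiset R) : (M.map fun c => L - C c).prod.totalDegree ≤ Multiset.card M := by
  induction M using Multiset.induction_on with
  | empty => simp
  | cons c M ih =>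
    rw [Multiset.map_cons, Multiset.prod_cons, Multiset.card_cons]
    have := (totalDegree_sub_C_le L c).trans hL
    exact (totalDegree_mul _ _).trans (by omega)

theorem totalDegree_prod_sub_C_sub_pow_lt {L : MvPolynomial σ R} (hL : L.totalDegree ≤ 1)
    {M : Multiset R} (hM : M ≠ 0) :
    ((M.map fun c => L - C c).prod - L ^ Multiset.card M).totalDegree < Multiset.card M := by
  induction M using Multiset.induction_on with
  | empty => exact absurd rfl hM
  | cons c M ih =>
    have hP := totalDegree_prod_sub_C_le hL M
    set P := (M.map fun c => L - C c).prod
    rw [Multiset.map_cons, Multiset.prod_cons, Multiset.card_cons,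
      show (L - C c) * P - L ^ (Multiset.card M + 1) = L * (P - L ^ Multiset.card M) - C c * P by
        ring]
    refine (totalDegree_sub _ _).trans_lt (max_lt ?_ ?_)
    · rcases eq_or_ne M 0 with rfl | hM'
      · simp [P]
      · have := ih hM'
        exact (totalDegree_mul _ _).trans_lt (by omega)
    · exact (totalDegree_mul _ _).trans_lt (by simp only [totalDegree_C]; omega)

theorem coeff_X_sub_X_mul_X_add_X_pow (i j : ℕ) :
    coeff (Finsupp.single 0 (i + 1) + Finsupp.single 1 (j + 1))
      ((X 0 - X 1 : MvPolynomial (Fin 2) R) * (X 0 + X 1) ^ (i + j + 1)) =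
      ((i + j + 1).choose i - (i + j + 1).choose (i + 1) : R) := by
  have h0 : Finsupp.single (0 : Fin 2) (i + 1) + Finsupp.single 1 (j + 1) =
      Finsupp.single 0 1 + (Finsupp.single 0 i + Finsupp.single 1 (j + 1)) := by
    rw [← add_assoc, ← Finsupp.single_add, add_comm 1 i]
  have h1 : Finsupp.single (0 : Fin 2) (i + 1) + Finsupp.single 1 (j + 1) =
      Finsupp.single 1 1 + (Finsupp.single 0 (i + 1) + Finsupp.single 1 j) := by
    rw [add_left_comm, ← Finsupp.single_add, add_comm 1 j]
  rw [sub_mul, coeff_sub]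
  congr 1
  · rw [h0, coeff_X_mul, coeff_add_pow, if_pos (by simp; omega)]
    simp
  · rw [h1, coeff_X_mul, coeff_add_pow, if_pos (by simp; omega)]
    simp

theorem totalDegree_X_add_X_le [Nontrivial R] :
    (X 0 + X 1 : MvPolynomial (Fin 2) R).totalDegree ≤ 1 :=
  (totalDegree_add _ _).trans (by simp [totalDegree_X])

theorem totalDegree_X_sub_X_le [Nontrivial R] :
    (X 0 - X 1 : MvPolynomial (Fin 2) R).totalDegree ≤ 1 :=
  (totalDegree_sub _ _).trans (by simp [totalDegree_X])

theorem totalDegree_X_sub_X_mul_prod_X_add_X_sub_C_le [Nontrivial R] (M : Multiset R) :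
    ((X 0 - X 1 : MvPolynomial (Fin 2) R) * (M.map fun c => X 0 + X 1 - C c).prod).totalDegree ≤
      Multiset.card M + 1 := by
  have := totalDegree_prod_sub_C_le totalDegree_X_add_X_le M
  have := totalDegree_X_sub_X_le (R := R)
  exact (totalDegree_mul _ _).trans (by omega)

theorem coeff_X_sub_X_mul_prod_X_add_X_sub_C {i j : ℕ} {M : Multiset R}
    (hM : Multiset.card M = i + j + 1) :
    coeff (Finsupp.single 0 (i + 1) + Finsupp.single 1 (j + 1))
      ((X 0 - X 1 : MvPolynomial (Fin 2) R) * (M.map fun c => X 0 + X 1 - C c).prod) =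
      ((i + j + 1).choose i - (i + j + 1).choose (i + 1) : R) := by
  nontriviality R
  rw [← coeff_X_sub_X_mul_X_add_X_pow, ← sub_eq_zero, ← coeff_sub, ← mul_sub, ← hM]
  apply coeff_eq_zero_of_totalDegree_lt
  have hM0 : M ≠ 0 := by
    rw [← Multiset.card_pos, hM]
    omega
  have := totalDegree_prod_sub_C_sub_pow_lt totalDegree_X_add_X_le hM0
  have := totalDegree_X_sub_X_le (R := R)
  refine (totalDegree_mul _ _).trans_lt ?_
  rw [← Finsupp.degree_apply, map_add, Finsupp.degree_single, Finsupp.degree_single]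
  omega

end MvPolynomial

theorem Finset.add_two_le_card_restrictedSumset {F : Type*} [Field F] [DecidableEq F]
    {A B : Finset F} {i j : ℕ} (hA : #A = i + 2) (hB : #B = j + 2)
    (hchoose : ((i + j + 1).choose i : F) ≠ (i + j + 1).choose (i + 1)) :
    i + j + 2 ≤ #(restrictedSumset A B) := by
  by_contra! hlt
  set D := restrictedSumset A B
  -- padding makes the product have degree exactly `i + j + 1`, as the Nullstellensatz needs
  set M : Multiset F := D.val + Multiset.replicate (i + j + 1 - #D) 0
  have hM : Multiset.card M = i + j + 1 := by
    simp only [M, Multiset.card_add, Multiset.card_replicate, card_val]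
    omega
  set f := (X 0 - X 1 : MvPolynomial (Fin 2) F) * (M.map fun c => X 0 + X 1 - C c).prod
  set t : Fin 2 →₀ ℕ := Finsupp.single 0 (i + 1) + Finsupp.single 1 (j + 1)
  have hft : f.coeff t ≠ 0 := by
    rw [coeff_X_sub_X_mul_prod_X_add_X_sub_C hM]
    exact sub_ne_zero.mpr hchoose
  have hdeg : f.totalDegree = t.degree := by
    refine le_antisymm ?_ (le_totalDegree (mem_support_iff.mpr hft))
    have : f.totalDegree ≤ Multiset.card M + 1 := totalDegree_X_sub_X_mul_prod_X_add_X_sub_C_le M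
    simp only [t, map_add, Finsupp.degree_single]
    omega
  obtain ⟨x, hx, hfx⟩ := combinatorial_nullstellensatz_exists_eval_nonzero f t hft hdeg ![A, B]
    (by intro k; fin_cases k <;> simp [t, hA, hB])
  refine hfx ?_
  have heval : eval x f = (x 0 - x 1) * (M.map fun c => x 0 + x 1 - c).prod := by
    simp [f, map_multiset_prod, Multiset.map_map]
  rw [heval]
  by_cases hx01 : x 0 = x 1
  · rw [hx01, sub_self, zero_mul]
  · have hmem : x 0 + x 1 ∈ M :=
      Multiset.mem_add.mpr (Or.inl (mem_restrictedSumset.mpr ⟨x 0, hx 0, x 1, hx 1, hx01, rfl⟩))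
    exact mul_eq_zero_of_right _
      (Multiset.prod_eq_zero (Multiset.mem_map.mpr ⟨_, hmem, sub_self _⟩))

theorem ZMod.card_add_card_sub_two_le_card_restrictedSumset {p : ℕ} [Fact p.Prime]
    {A B : Finset (ZMod p)} (hA : A.Nonempty) (hB : B.Nonempty) (hAB : #A ≠ #B)
    (hp : #A + #B - 2 ≤ p) : #A + #B - 2 ≤ #(restrictedSumset A B) := by
  by_cases hA1 : #A = 1
  · obtain ⟨a, rfl⟩ := card_eq_one.mp hA1
    have := card_sub_one_le_card_restrictedSumset_singleton a B
    rw [card_singleton]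
    omega
  by_cases hB1 : #B = 1
  · obtain ⟨b, rfl⟩ := card_eq_one.mp hB1
    have := card_sub_one_le_card_restrictedSumset_singleton b A
    rw [restrictedSumset_comm, card_singleton]
    omega
  obtain ⟨i, hi⟩ : ∃ i, #A = i + 2 := ⟨#A - 2, by have := hA.card_pos; omega⟩
  obtain ⟨j, hj⟩ : ∃ j, #B = j + 2 := ⟨#B - 2, by have := hB.card_pos; omega⟩
  have := add_two_le_card_restrictedSumset hi hj
    (ZMod.natCast_choose_ne_natCast_choose_succ (by omega) (by omega))
  omega

/-- **Erdős–Heilbronn conjecture** (Proposition 5.5). -/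
theorem erdos_heilbronn (p : ℕ) (hp : p.Prime) (A B : Finset (ZMod p))
    (hA : A.Nonempty) (hB : B.Nonempty) (hAB : A.card ≠ B.card) :
    min (A.card + B.card - 2) p ≤
      {x : ZMod p | ∃ a ∈ A, ∃ b ∈ B, a ≠ b ∧ a + b = x}.ncard := by
  have := Fact.mk hp
  have hset : {x : ZMod p | ∃ a ∈ A, ∃ b ∈ B, a ≠ b ∧ a + b = x} =
      restrictedSumset A B :=
    Set.ext fun x => mem_restrictedSumset.symm
  rw [hset, Set.ncard_coe_finset]
  rcases le_or_gt (#A + #B - 2) p with hle | hgt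
  · exact (min_le_left _ _).trans
      (ZMod.card_add_card_sub_two_le_card_restrictedSumset hA hB hAB hle)
  obtain ⟨A', hA', B', hB', hA'ne, hB'ne, hA'B', hcard⟩ :=
    exists_subset_subset_card_add_eq hA hB hAB (n := p + 2) (by have := hp.two_le; omega)
      (by omega)
  calc min (#A + #B - 2) p ≤ #A' + #B' - 2 := by omega
    _ ≤ #(restrictedSumset A' B') :=
      ZMod.card_add_card_sub_two_le_card_restrictedSumset hA'ne hB'ne hA'B' (by omega)
    _ ≤ #(restrictedSumset A B) := card_le_card (restrictedSumset_mono hA' hB')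
end

section
/- There exists an absolute constant C > 0 such that for every finite set P of points in ℝ² and every finite set L of affine lines in ℝ², the number of incidences |{(p, ℓ) ∈ P × L : p ∈ ℓ}| is at most C·(|P|^(2/3)·|L|^(2/3) + |P| + |L|). -/
/-!
Székely's proof. Join consecutive points of `P` along every line of `L`: this gives a geometric
graph on `P` with at least `I - |L|` edges (`I` the number of incidences), in which two crossing
edges lie on distinct lines and cross at the intersection point of these lines, so there are at
most `|L|²` crossing pairs. By the crossing lemma, a geometric graph with `E ≥ 5V` edges has at
least `E³ / (125 V²)` crossing pairs, hence `I - |L| ≤ 5 (|P| |L|)^(2/3) + 5 |P|`.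

The crossing lemma follows by averaging the bound `E ≤ 4V + X` over random induced subgraphs,
and that bound reduces to `E ≤ 4V` for crossing-free geometric graphs. The latter is proved by
sweeping a vertical line across the graph after a generic shear. Every edge `e` that is not the
topmost edge entering its right endpoint `p` is directly below another edge `f` entering `p`
just before `p`; the pair `(e, f)` became adjacent at some vertex `q`, either because `f` starts
at `q`, or `e` starts at `q`, or the edges ending at `q` that separated them disappeared. Each
vertex creates at most one such pair of each of the three kinds, so `E ≤ V + 3V`.
-/

open Finset

open scoped Classical

noncomputable section

section GeometricGraph

variable {X : Type*} [AddCommGroup X] [Module ℝ X]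

def SegmentsCross (e f : X × X) : Prop :=
  (openSegment ℝ e.1 e.2 ∩ openSegment ℝ f.1 f.2).Nonempty

def crossingPairs [DecidableEq X] (E : Finset (X × X)) : Finset ((X × X) × (X × X)) :=
  (E ×ˢ E).filter fun ef => ef.1 ≠ ef.2 ∧ SegmentsCross ef.1 ef.2

structure IsGeometricGraph (V : Finset X) (E : Finset (X × X)) : Prop where
  fst_mem : ∀ e ∈ E, e.1 ∈ V
  snd_mem : ∀ e ∈ E, e.2 ∈ V
  fst_ne_snd : ∀ e ∈ E, e.1 ≠ e.2
  not_mem_openSegment : ∀ e ∈ E, ∀ p ∈ V, p ∉ openSegment ℝ e.1 e.2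

def inducedEdges (E : Finset (X × X)) (S : Finset X) : Finset (X × X) :=
  E.filter fun e => e.1 ∈ S ∧ e.2 ∈ S

lemma IsGeometricGraph.mono {V : Finset X} {E E' : Finset (X × X)} (hG : IsGeometricGraph V E)
    (hE : E' ⊆ E) : IsGeometricGraph V E' where
  fst_mem e he := hG.fst_mem e (hE he)
  snd_mem e he := hG.snd_mem e (hE he)
  fst_ne_snd e he := hG.fst_ne_snd e (hE he)
  not_mem_openSegment e he := hG.not_mem_openSegment e (hE he)

lemma IsGeometricGraph.induce {V S : Finset X} {E : Finset (X × X)} (hG : IsGeometricGraph V E)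
    (hS : S ⊆ V) : IsGeometricGraph S (inducedEdges E S) where
  fst_mem _ he := (mem_filter.1 he).2.1
  snd_mem _ he := (mem_filter.1 he).2.2
  fst_ne_snd e he := hG.fst_ne_snd e (mem_filter.1 he).1
  not_mem_openSegment e he p hp := hG.not_mem_openSegment e (mem_filter.1 he).1 p (hS hp)

end GeometricGraph

lemma IsPreconnected.lt_of_forall_ne {Y α : Type*} [TopologicalSpace Y] [LinearOrder α]
    [TopologicalSpace α] [OrderClosedTopology α] {s : Set Y} (hs : IsPreconnected s)
    {f g : Y → α} (hf : ContinuousOn f s) (hg : ContinuousOn g s) (hne : ∀ x ∈ s, f x ≠ g x)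
    {a b : Y} (ha : a ∈ s) (hb : b ∈ s) (hab : f a < g a) : f b < g b := by
  by_contra! hba
  obtain ⟨x, hx, hfgx⟩ := hs.intermediate_value₂ ha hb hf hg hab.le hba
  exact hne x hx hfgx

section AdjacentIn

variable {α : Type*} {A B O : Set α} {h : α → ℝ} {e f e' f' w w' : α}

def AdjacentIn (A : Set α) (h : α → ℝ) (e f : α) : Prop :=
  e ∈ A ∧ f ∈ A ∧ h e < h f ∧ ∀ g ∈ A, h e < h g → h f ≤ h g

def IsBlock (A : Set α) (h : α → ℝ) (O : Set α) : Prop :=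
  O ⊆ A ∧ ∀ a ∈ O, ∀ b ∈ O, ∀ g ∈ A, h a < h g → h g < h b → g ∈ O

lemma IsBlock.lt_of_lt_of_mem (hO : IsBlock A h O) (hinj : Set.InjOn h A) (he : e ∈ A \ O)
    (hw : w ∈ O) (hew : h e < h w) {u : α} (hu : u ∈ O) : h e < h u := by
  by_contra! hue
  rcases hue.lt_or_eq with hlt | heq
  · exact he.2 (hO.2 u hu w hw e he.1 hlt hew)
  · exact he.2 (hinj (hO.1 hu) he.1 heq ▸ hu)

lemma IsBlock.eq_of_adjacentIn_below (hO : IsBlock A h O) (hinj : Set.InjOn h A)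
    (hB : A \ O ⊆ B) (he : e ∈ A \ O) (hef : AdjacentIn B h e f) (hw : w ∈ O)
    (hew : h e < h w) (hwf : h w ≤ h f) (he' : e' ∈ A \ O) (hef' : AdjacentIn B h e' f')
    (hw' : w' ∈ O) (hew' : h e' < h w') (hwf' : h w' ≤ h f') : e = e' := by
  wlog hlt : h e < h e' generalizing e f w e' f' w'
  · rcases (not_lt.1 hlt).lt_or_eq with hlt | heq
    · exact (this he' hef' hw' hew' hwf' he hef hw hew hwf hlt).symm
    · exact hinj he.1 he'.1 heq.symm
  exact absurd (hef.2.2.2 e' (hB he') hlt) <| not_le.2 <|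
    (hO.lt_of_lt_of_mem hinj he' hw' hew' hw).trans_le hwf

lemma IsBlock.eq_of_adjacentIn_above (hO : IsBlock A h O) (hinj : Set.InjOn h A)
    (he : e ∈ O) (hef : AdjacentIn A h e f) (hf : f ∉ O)
    (he' : e' ∈ O) (hef' : AdjacentIn A h e' f') (hf' : f' ∉ O) : e = e' := by
  wlog hlt : h e < h e' generalizing e f e' f'
  · rcases (not_lt.1 hlt).lt_or_eq with hlt | heq
    · exact (this he' hef' hf' he hef hf hlt).symm
    · exact hinj (hO.1 he) (hO.1 he') heq.symm
  exfalso
  rcases (hef.2.2.2 e' (hO.1 he') hlt).lt_or_eq with hlt' | heq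
  · exact hf (hO.2 e he e' he' f hef.2.1 hef.2.2.1 hlt')
  · exact hf (hinj hef.2.1 (hO.1 he') heq ▸ he')

end AdjacentIn

namespace Sweep

variable {c : ℝ} {e : (ℝ × ℝ) × (ℝ × ℝ)}

def Spans (e : (ℝ × ℝ) × (ℝ × ℝ)) (c : ℝ) : Prop := c ∈ Set.Ioo e.1.1 e.2.1

def height (e : (ℝ × ℝ) × (ℝ × ℝ)) (c : ℝ) : ℝ :=
  e.1.2 + (c - e.1.1) / (e.2.1 - e.1.1) * (e.2.2 - e.1.2)

def alive (E : Finset ((ℝ × ℝ) × (ℝ × ℝ))) (c : ℝ) : Set ((ℝ × ℝ) × (ℝ × ℝ)) :=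
  {g | g ∈ E ∧ Spans g c}

def Adjacent (E : Finset ((ℝ × ℝ) × (ℝ × ℝ))) (c : ℝ) (e f : (ℝ × ℝ) × (ℝ × ℝ)) : Prop :=
  AdjacentIn (alive E c) (height · c) e f

def IsUppermost (E : Finset ((ℝ × ℝ) × (ℝ × ℝ))) (δ : ℝ) (e : (ℝ × ℝ) × (ℝ × ℝ)) : Prop :=
  ∀ f ∈ E, f.2 = e.2 → height f (e.2.1 - δ) ≤ height e (e.2.1 - δ)

/-- In a sweep with vertex abscissae `2δ`-apart, `q.1 - δ` and `q.1 + δ` are the positions of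
the sweep line just before and just after the vertex `q`. -/
def CreatedAt (E : Finset ((ℝ × ℝ) × (ℝ × ℝ))) (δ : ℝ) (q : ℝ × ℝ)
    (e f : (ℝ × ℝ) × (ℝ × ℝ)) : Prop :=
  Adjacent E (q.1 + δ) e f ∧ ¬ Adjacent E (q.1 - δ) e f

def creationClass (q : ℝ × ℝ) (e f : (ℝ × ℝ) × (ℝ × ℝ)) : Fin 3 :=
  if f.1 = q then 0 else if e.1 = q then 1 else 2

lemma height_fst (e : (ℝ × ℝ) × (ℝ × ℝ)) : height e e.1.1 = e.1.2 := by
  simp [height]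

lemma height_snd (he : e.1.1 ≠ e.2.1) : height e e.2.1 = e.2.2 := by
  rw [height, div_self (sub_ne_zero.2 he.symm)]
  ring

lemma continuous_height (e : (ℝ × ℝ) × (ℝ × ℝ)) : Continuous (height e) := by
  unfold height
  fun_prop

lemma mk_height_mem_openSegment (h : Spans e c) : (c, height e c) ∈ openSegment ℝ e.1 e.2 := by
  obtain ⟨h₁, h₂⟩ := h
  have hpos : 0 < e.2.1 - e.1.1 := by linarith
  rw [openSegment_eq_image']
  refine ⟨(c - e.1.1) / (e.2.1 - e.1.1),
    ⟨div_pos (by linarith) hpos, (div_lt_one hpos).2 (by linarith)⟩, ?_⟩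
  ext
  · simp only [Prod.fst_add, Prod.smul_fst, Prod.fst_sub, smul_eq_mul]
    field_simp
    ring
  · simp only [Prod.snd_add, Prod.smul_snd, Prod.snd_sub, smul_eq_mul, height]

lemma height_lt_of_forall_ne {e f : (ℝ × ℝ) × (ℝ × ℝ)} {a b : ℝ}
    (hne : ∀ x ∈ Set.uIcc a b, height e x ≠ height f x) (h : height e a < height f a) :
    height e b < height f b :=
  isPreconnected_uIcc.lt_of_forall_ne (continuous_height e).continuousOn
    (continuous_height f).continuousOn hne Set.left_mem_uIcc Set.right_mem_uIcc h

lemma spans_of_mem_uIcc {c₁ c₂ : ℝ} (h₁ : Spans e c₁) (h₂ : Spans e c₂)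
    (hc : c ∈ Set.uIcc c₁ c₂) : Spans e c :=
  Set.ordConnected_Ioo.uIcc_subset h₁ h₂ hc

end Sweep

structure IsSweepable (V : Finset (ℝ × ℝ)) (E : Finset ((ℝ × ℝ) × (ℝ × ℝ))) (δ : ℝ) : Prop where
  fst_mem : ∀ e ∈ E, e.1 ∈ V
  snd_mem : ∀ e ∈ E, e.2 ∈ V
  fst_lt_snd : ∀ e ∈ E, e.1.1 < e.2.1
  not_mem_openSegment : ∀ e ∈ E, ∀ p ∈ V, p ∉ openSegment ℝ e.1 e.2
  not_segmentsCross : ∀ e ∈ E, ∀ f ∈ E, e ≠ f → ¬ SegmentsCross e f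
  pos : 0 < δ
  eq_of_abs_sub_lt : ∀ a ∈ V, ∀ b ∈ V, |a.1 - b.1| < 2 * δ → a = b

namespace IsSweepable

open Sweep

variable {V : Finset (ℝ × ℝ)} {E : Finset ((ℝ × ℝ) × (ℝ × ℝ))} {δ c c₁ c₂ : ℝ}
  {p q : ℝ × ℝ} {e f g e' f' : (ℝ × ℝ) × (ℝ × ℝ)}

lemma add_le_of_lt (S : IsSweepable V E δ) (hp : p ∈ V) (hq : q ∈ V) (hpq : p.1 < q.1) :
    p.1 + 2 * δ ≤ q.1 := by
  by_contra! h
  obtain rfl := S.eq_of_abs_sub_lt p hp q hq (abs_sub_lt_iff.2 ⟨by linarith, by linarith⟩)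
  exact lt_irrefl _ hpq

lemma eq_of_fst_eq (S : IsSweepable V E δ) (hp : p ∈ V) (hq : q ∈ V) (hpq : p.1 = q.1) :
    p = q :=
  S.eq_of_abs_sub_lt p hp q hq (by rw [hpq, sub_self, abs_zero]; linarith [S.pos])

lemma height_ne (S : IsSweepable V E δ) (he : e ∈ E) (hf : f ∈ E) (hef : e ≠ f)
    (hec : Spans e c) (hfc : Spans f c) : height e c ≠ height f c := fun h =>
  S.not_segmentsCross e he f hf hef
    ⟨_, mk_height_mem_openSegment hec, h ▸ mk_height_mem_openSegment hfc⟩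

lemma injOn_height (S : IsSweepable V E δ) (c : ℝ) : Set.InjOn (height · c) (alive E c) :=
  fun _ ha _ hb h => by_contra fun hab => S.height_ne ha.1 hb.1 hab ha.2 hb.2 h

lemma height_ne_snd_of_spans (S : IsSweepable V E δ) (hg : g ∈ E) (hq : q ∈ V)
    (hgq : Spans g q.1) : height g q.1 ≠ q.2 := fun h =>
  S.not_mem_openSegment g hg q hq (by simpa [h] using mk_height_mem_openSegment hgq)

lemma height_lt_iff (S : IsSweepable V E δ) (he : e ∈ E) (hf : f ∈ E)
    (he₁ : Spans e c₁) (hf₁ : Spans f c₁) (he₂ : Spans e c₂) (hf₂ : Spans f c₂) :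
    height e c₁ < height f c₁ ↔ height e c₂ < height f c₂ := by
  rcases eq_or_ne e f with rfl | hef
  · simp
  have hne : ∀ x ∈ Set.uIcc c₁ c₂, height e x ≠ height f x := fun x hx =>
    S.height_ne he hf hef (spans_of_mem_uIcc he₁ he₂ hx) (spans_of_mem_uIcc hf₁ hf₂ hx)
  exact ⟨height_lt_of_forall_ne hne, height_lt_of_forall_ne (Set.uIcc_comm c₁ c₂ ▸ hne)⟩

lemma spans_sub_of_snd_eq (S : IsSweepable V E δ) (he : e ∈ E) (hq : e.2 = q) :
    Spans e (q.1 - δ) := by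
  subst hq
  have := S.add_le_of_lt (S.fst_mem e he) (S.snd_mem e he) (S.fst_lt_snd e he)
  exact ⟨by linarith [S.pos], by linarith [S.pos]⟩

lemma spans_add_of_fst_eq (S : IsSweepable V E δ) (he : e ∈ E) (hq : e.1 = q) :
    Spans e (q.1 + δ) := by
  subst hq
  have := S.add_le_of_lt (S.fst_mem e he) (S.snd_mem e he) (S.fst_lt_snd e he)
  exact ⟨by linarith [S.pos], by linarith [S.pos]⟩

lemma spans_sub_of_spans_add (S : IsSweepable V E δ) (he : e ∈ E) (hq : q ∈ V)
    (h : Spans e (q.1 + δ)) (hne : e.1 ≠ q) : Spans e (q.1 - δ) := by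
  obtain ⟨h₁, h₂⟩ := h
  rcases lt_or_gt_of_ne fun h => hne (S.eq_of_fst_eq (S.fst_mem e he) hq h) with hlt | hlt
  · exact ⟨by linarith [S.add_le_of_lt (S.fst_mem e he) hq hlt], by linarith [S.pos]⟩
  · linarith [S.add_le_of_lt hq (S.fst_mem e he) hlt, S.pos]

lemma spans_add_of_spans_sub (S : IsSweepable V E δ) (he : e ∈ E) (hq : q ∈ V)
    (h : Spans e (q.1 - δ)) (hne : e.2 ≠ q) : Spans e (q.1 + δ) := by
  obtain ⟨h₁, h₂⟩ := h
  rcases lt_or_gt_of_ne fun h => hne (S.eq_of_fst_eq (S.snd_mem e he) hq h) with hlt | hlt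
  · linarith [S.add_le_of_lt (S.snd_mem e he) hq hlt, S.pos]
  · exact ⟨by linarith [S.pos], by linarith [S.add_le_of_lt hq (S.snd_mem e he) hlt]⟩

lemma snd_ne_of_spans_add (S : IsSweepable V E δ) (h : Spans e (q.1 + δ)) : e.2 ≠ q := by
  rintro rfl
  linarith [h.2, S.pos]

lemma not_between_of_height_eq (S : IsSweepable V E δ) (hq : q ∈ V) (he : e ∈ E) (hf : f ∈ E)
    (hg : g ∈ E) (heq : height e q.1 = q.2) (hfq : height f q.1 = q.2) (hgq : Spans g q.1)
    (hspan : ∀ x ∈ Set.uIcc c q.1, x ≠ q.1 → Spans e x ∧ Spans f x ∧ Spans g x) :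
    ¬ (height e c < height g c ∧ height g c < height f c) := by
  rintro ⟨h₁, h₂⟩
  have hne : ∀ {a}, a ∈ E → height a q.1 = q.2 → a ≠ g →
      (∀ x ∈ Set.uIcc c q.1, x ≠ q.1 → Spans a x) →
      ∀ x ∈ Set.uIcc c q.1, height a x ≠ height g x := fun {a} ha haq hag haspan x hx => by
    by_cases hxq : x = q.1
    · rw [hxq, haq]
      exact (S.height_ne_snd_of_spans hg hq hgq).symm
    · exact S.height_ne ha hg hag (haspan x hx hxq) (hspan x hx hxq).2.2
  have heg : e ≠ g := by rintro rfl; exact lt_irrefl _ h₁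
  have hfg : f ≠ g := by rintro rfl; exact lt_irrefl _ h₂
  have h₁' := height_lt_of_forall_ne
    (hne he heq heg fun x hx hxq => (hspan x hx hxq).1) h₁
  have h₂' := height_lt_of_forall_ne
    (fun x hx => (hne hf hfq hfg (fun x hx hxq => (hspan x hx hxq).2.1) x hx).symm) h₂
  linarith

lemma isBlock_fst_eq (S : IsSweepable V E δ) (hq : q ∈ V) :
    IsBlock (alive E (q.1 + δ)) (height · (q.1 + δ)) {g | g ∈ E ∧ g.1 = q} := by
  refine ⟨fun g hg => ⟨hg.1, S.spans_add_of_fst_eq hg.1 hg.2⟩,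
    fun a ha b hb g hg hag hgb => ⟨hg.1, by_contra fun hgq => ?_⟩⟩
  have hg' := S.spans_sub_of_spans_add hg.1 hq hg.2 hgq
  have hstart : ∀ {k}, k ∈ {g | g ∈ E ∧ g.1 = q} →
      ∀ x ∈ Set.uIcc (q.1 + δ) q.1, x ≠ q.1 → Spans k x := fun {k} hk x hx hxq => by
    rw [Set.uIcc_of_ge (by linarith [S.pos])] at hx
    have hk₁ : k.1.1 = q.1 := by rw [hk.2]
    exact ⟨hk₁ ▸ lt_of_le_of_ne hx.1 (Ne.symm hxq),
      hx.2.trans_lt (S.spans_add_of_fst_eq hk.1 hk.2).2⟩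
  refine S.not_between_of_height_eq hq ha.1 hb.1 hg.1 (ha.2 ▸ height_fst a) (hb.2 ▸ height_fst b)
    (spans_of_mem_uIcc hg' hg.2 ?_) (fun x hx hxq => ⟨hstart ha x hx hxq, hstart hb x hx hxq,
      spans_of_mem_uIcc hg' hg.2 ?_⟩) ⟨hag, hgb⟩
  · exact Set.mem_uIcc.2 (Or.inl ⟨by linarith [S.pos], by linarith [S.pos]⟩)
  · rw [Set.uIcc_of_ge (by linarith [S.pos])] at hx
    exact Set.mem_uIcc.2 (Or.inl ⟨by linarith [S.pos, hx.1], hx.2⟩)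

lemma isBlock_snd_eq (S : IsSweepable V E δ) (hq : q ∈ V) :
    IsBlock (alive E (q.1 - δ)) (height · (q.1 - δ)) {g | g ∈ E ∧ g.2 = q} := by
  refine ⟨fun g hg => ⟨hg.1, S.spans_sub_of_snd_eq hg.1 hg.2⟩,
    fun a ha b hb g hg hag hgb => ⟨hg.1, by_contra fun hgq => ?_⟩⟩
  have hg' := S.spans_add_of_spans_sub hg.1 hq hg.2 hgq
  have hend : ∀ {k}, k ∈ {g | g ∈ E ∧ g.2 = q} →
      ∀ x ∈ Set.uIcc (q.1 - δ) q.1, x ≠ q.1 → Spans k x := fun {k} hk x hx hxq => by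
    rw [Set.uIcc_of_le (by linarith [S.pos])] at hx
    have hk₂ : k.2.1 = q.1 := by rw [hk.2]
    exact ⟨(S.spans_sub_of_snd_eq hk.1 hk.2).1.trans_le hx.1,
      hk₂ ▸ lt_of_le_of_ne hx.2 hxq⟩
  have hsnd : ∀ {k}, k ∈ {g | g ∈ E ∧ g.2 = q} → height k q.1 = q.2 := fun {k} hk => by
    rw [← hk.2]
    exact height_snd (S.fst_lt_snd k hk.1).ne
  refine S.not_between_of_height_eq hq ha.1 hb.1 hg.1 (hsnd ha) (hsnd hb)
    (spans_of_mem_uIcc hg.2 hg' ?_) (fun x hx hxq => ⟨hend ha x hx hxq, hend hb x hx hxq,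
      spans_of_mem_uIcc hg.2 hg' ?_⟩) ⟨hag, hgb⟩
  · exact Set.mem_uIcc.2 (Or.inl ⟨by linarith [S.pos], by linarith [S.pos]⟩)
  · rw [Set.uIcc_of_le (by linarith [S.pos])] at hx
    exact Set.mem_uIcc.2 (Or.inl ⟨hx.1, by linarith [S.pos, hx.2]⟩)

lemma adjacentIn_of_adjacent (S : IsSweepable V E δ) {B : Set ((ℝ × ℝ) × (ℝ × ℝ))}
    (hB : ∀ g ∈ B, g ∈ E ∧ Spans g c₁ ∧ Spans g c₂) (he : e ∈ B) (hf : f ∈ B)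
    (h : Adjacent E c₂ e f) : AdjacentIn B (height · c₁) e f := by
  obtain ⟨heE, he₁, he₂⟩ := hB e he
  obtain ⟨hfE, hf₁, hf₂⟩ := hB f hf
  refine ⟨he, hf, (S.height_lt_iff heE hfE he₁ hf₁ he₂ hf₂).2 h.2.2.1, fun g hg hlt => ?_⟩
  obtain ⟨hgE, hg₁, hg₂⟩ := hB g hg
  by_contra! hgf
  exact absurd (h.2.2.2 g ⟨hgE, hg₂⟩ ((S.height_lt_iff heE hgE he₁ hg₁ he₂ hg₂).1 hlt))
    (not_le.2 ((S.height_lt_iff hgE hfE hg₁ hf₁ hg₂ hf₂).1 hgf))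

lemma adjacent_of_forall_not_mem_Icc (S : IsSweepable V E δ) (hc : c₁ ≤ c₂)
    (hfree : ∀ r ∈ V, r.1 ∉ Set.Icc c₁ c₂) (h : Adjacent E c₂ e f) : Adjacent E c₁ e f := by
  have h₁₂ : ∀ g ∈ E, Spans g c₁ → Spans g c₂ := fun g hg ⟨h₁, h₂⟩ => by
    have := hfree _ (S.snd_mem g hg)
    simp only [Set.mem_Icc, not_and_or, not_le] at this
    exact ⟨by linarith, by rcases this with h | h <;> linarith⟩
  have h₂₁ : ∀ g ∈ E, Spans g c₂ → Spans g c₁ := fun g hg ⟨h₁, h₂⟩ => by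
    have := hfree _ (S.fst_mem g hg)
    simp only [Set.mem_Icc, not_and_or, not_le] at this
    exact ⟨by rcases this with h | h <;> linarith, by linarith⟩
  exact S.adjacentIn_of_adjacent (fun g hg => ⟨hg.1, hg.2, h₁₂ g hg.1 hg.2⟩)
    ⟨h.1.1, h₂₁ e h.1.1 h.1.2⟩ ⟨h.2.1.1, h₂₁ f h.2.1.1 h.2.1.2⟩ h

lemma eq_of_adjacent_of_fst_eq_right (S : IsSweepable V E δ) (hq : q ∈ V)
    (h : Adjacent E (q.1 + δ) e f) (hf : f.1 = q) (he : e.1 ≠ q)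
    (h' : Adjacent E (q.1 + δ) e' f') (hf' : f'.1 = q) (he' : e'.1 ≠ q) : e = e' :=
  (S.isBlock_fst_eq hq).eq_of_adjacentIn_below (S.injOn_height _) Set.sdiff_subset
    ⟨h.1, fun h => he h.2⟩ h ⟨h.2.1.1, hf⟩ h.2.2.1 le_rfl
    ⟨h'.1, fun h => he' h.2⟩ h' ⟨h'.2.1.1, hf'⟩ h'.2.2.1 le_rfl

lemma eq_of_adjacent_of_fst_eq_left (S : IsSweepable V E δ) (hq : q ∈ V)
    (h : Adjacent E (q.1 + δ) e f) (he : e.1 = q) (hf : f.1 ≠ q)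
    (h' : Adjacent E (q.1 + δ) e' f') (he' : e'.1 = q) (hf' : f'.1 ≠ q) : e = e' :=
  (S.isBlock_fst_eq hq).eq_of_adjacentIn_above (S.injOn_height _)
    ⟨h.1.1, he⟩ h (fun h => hf h.2) ⟨h'.1.1, he'⟩ h' (fun h => hf' h.2)

/-- An adjacency created at `q` by neither edge starting at `q` was created by the removal of
the edges ending at `q`. -/
lemma exists_snd_eq_between (S : IsSweepable V E δ) (hq : q ∈ V) (h : CreatedAt E δ q e f)
    (he : e.1 ≠ q) (hf : f.1 ≠ q) :
    e ∈ alive E (q.1 - δ) \ {g | g ∈ E ∧ g.2 = q} ∧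
    AdjacentIn (alive E (q.1 - δ) \ {g | g ∈ E ∧ g.2 = q}) (height · (q.1 - δ)) e f ∧
    ∃ w ∈ {g | g ∈ E ∧ g.2 = q}, height e (q.1 - δ) < height w (q.1 - δ) ∧
      height w (q.1 - δ) < height f (q.1 - δ) := by
  obtain ⟨hadj, hnadj⟩ := h
  have ⟨⟨heE, hea⟩, ⟨hfE, hfa⟩, _⟩ := hadj
  have heb := S.spans_sub_of_spans_add heE hq hea he
  have hfb := S.spans_sub_of_spans_add hfE hq hfa hf
  have hB : AdjacentIn (alive E (q.1 - δ) \ {g | g ∈ E ∧ g.2 = q}) (height · (q.1 - δ)) e f := by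
    refine S.adjacentIn_of_adjacent (fun g hg => ⟨hg.1.1, hg.1.2, ?_⟩)
      ⟨⟨heE, heb⟩, fun h => S.snd_ne_of_spans_add hea h.2⟩
      ⟨⟨hfE, hfb⟩, fun h => S.snd_ne_of_spans_add hfa h.2⟩ hadj
    exact S.spans_add_of_spans_sub hg.1.1 hq hg.1.2 fun h => hg.2 ⟨hg.1.1, h⟩
  refine ⟨hB.1, hB, ?_⟩
  simp only [Adjacent, AdjacentIn, not_and, not_forall, not_le] at hnadj
  obtain ⟨w, hw, hew, hwf⟩ := hnadj ⟨heE, heb⟩ ⟨hfE, hfb⟩ hB.2.2.1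
  by_cases hwq : w.2 = q
  · exact ⟨w, ⟨hw.1, hwq⟩, hew, hwf⟩
  · exact absurd (hB.2.2.2 w ⟨hw, fun h => hwq h.2⟩ hew) (not_le.2 hwf)

lemma eq_of_createdAt_of_fst_ne (S : IsSweepable V E δ) (hq : q ∈ V)
    (h : CreatedAt E δ q e f) (he : e.1 ≠ q) (hf : f.1 ≠ q)
    (h' : CreatedAt E δ q e' f') (he' : e'.1 ≠ q) (hf' : f'.1 ≠ q) : e = e' := by
  obtain ⟨heb, hB, w, hw, hew, hwf⟩ := S.exists_snd_eq_between hq h he hf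
  obtain ⟨heb', hB', w', hw', hew', hwf'⟩ := S.exists_snd_eq_between hq h' he' hf'
  exact (S.isBlock_snd_eq hq).eq_of_adjacentIn_below (S.injOn_height _) subset_rfl
    heb hB hw hew hwf.le heb' hB' hw' hew' hwf'.le

lemma eq_of_createdAt (S : IsSweepable V E δ) (hq : q ∈ V)
    (h : CreatedAt E δ q e f) (hef : e.2 = f.2) (h' : CreatedAt E δ q e' f') (hef' : e'.2 = f'.2)
    (hk : creationClass q e f = creationClass q e' f') : e = e' := by
  have fst_ne : ∀ {e f}, CreatedAt E δ q e f → e.2 = f.2 → f.1 = q → e.1 ≠ q :=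
    fun h hef hf he => by
      obtain rfl := Prod.ext (he.trans hf.symm) hef
      exact lt_irrefl _ h.1.2.2.1
  rcases em (f.1 = q) with h₁ | h₁ <;> rcases em (f'.1 = q) with h₂ | h₂ <;>
    rcases em (e.1 = q) with h₃ | h₃ <;> rcases em (e'.1 = q) with h₄ | h₄ <;>
    simp only [creationClass, h₁, h₂, h₃, h₄, ↓reduceIte, Fin.reduceEq] at hk <;>
    first
    | exact S.eq_of_adjacent_of_fst_eq_right hq h.1 h₁ (fst_ne h hef h₁) h'.1 h₂ (fst_ne h' hef' h₂)
    | exact S.eq_of_adjacent_of_fst_eq_left hq h.1 h₃ h₁ h'.1 h₄ h₂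
    | exact S.eq_of_createdAt_of_fst_ne hq h h₃ h₁ h' h₄ h₂

lemma exists_adjacent_of_lt (S : IsSweepable V E δ) (he : e ∈ E) {f₀} (hf₀ : f₀ ∈ E)
    (hf₀e : f₀.2 = e.2) (hlt : height e (e.2.1 - δ) < height f₀ (e.2.1 - δ)) :
    ∃ f ∈ E, f.2 = e.2 ∧ Adjacent E (e.2.1 - δ) e f := by
  obtain ⟨f, hfF, hmin⟩ := (E.filter fun g => g.2 = e.2 ∧
    height e (e.2.1 - δ) < height g (e.2.1 - δ)).exists_min_image (height · (e.2.1 - δ))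
      ⟨f₀, mem_filter.2 ⟨hf₀, hf₀e, hlt⟩⟩
  obtain ⟨hf, hfe, hef⟩ := mem_filter.1 hfF
  have hO := S.isBlock_snd_eq (S.snd_mem e he)
  refine ⟨f, hf, hfe, hO.1 ⟨he, rfl⟩, hO.1 ⟨hf, hfe⟩, hef, fun g hg hlt' => ?_⟩
  by_contra! hgf
  exact absurd (hmin g (mem_filter.2 ⟨hg.1, (hO.2 e ⟨he, rfl⟩ f ⟨hf, hfe⟩ g hg hlt' hgf).2, hlt'⟩))
    (not_le.2 hgf)

/-- `q` is the last vertex before `p` at which the pair is not adjacent. -/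
lemma exists_createdAt (S : IsSweepable V E δ) (hp : p ∈ V) (h : Adjacent E (p.1 - δ) e f) :
    ∃ q ∈ V, CreatedAt E δ q e f := by
  have hQ : (V.filter fun r => r.1 < p.1 ∧ ¬ Adjacent E (r.1 - δ) e f).Nonempty := by
    obtain ⟨⟨he, he₁, -⟩, ⟨hf, hf₁, -⟩, -⟩ := h
    rcases le_total e.1.1 f.1.1 with hle | hle
    · exact ⟨f.1, mem_filter.2 ⟨S.fst_mem f hf, by linarith [S.pos],
        fun h => by linarith [h.2.1.2.1, S.pos]⟩⟩
    · exact ⟨e.1, mem_filter.2 ⟨S.fst_mem e he, by linarith [S.pos],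
        fun h => by linarith [h.1.2.1, S.pos]⟩⟩
  obtain ⟨q, hqQ, hqmax⟩ := exists_max_image _ Prod.fst hQ
  obtain ⟨hq, hqp, hqadj⟩ := mem_filter.1 hqQ
  obtain ⟨r, hrR, hrmin⟩ :=
    exists_min_image (V.filter fun r => q.1 < r.1) Prod.fst ⟨p, mem_filter.2 ⟨hp, hqp⟩⟩
  obtain ⟨hr, hqr⟩ := mem_filter.1 hrR
  have hradj : Adjacent E (r.1 - δ) e f := by
    by_cases hrp : r = p
    · rwa [hrp]
    have hrp' : r.1 < p.1 := (hrmin p (mem_filter.2 ⟨hp, hqp⟩)).lt_of_ne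
      fun h => hrp (S.eq_of_fst_eq hr hp h)
    by_contra hna
    exact absurd (hqmax r (mem_filter.2 ⟨hr, hrp', hna⟩)) (not_le.2 hqr)
  refine ⟨q, hq, S.adjacent_of_forall_not_mem_Icc (by linarith [S.add_le_of_lt hq hr hqr]) ?_
    hradj, hqadj⟩
  rintro s hs ⟨hs₁, hs₂⟩
  linarith [hrmin s (mem_filter.2 ⟨hs, by linarith [S.pos]⟩), S.pos]

lemma card_filter_isUppermost_le (S : IsSweepable V E δ) :
    (E.filter (IsUppermost E δ)).card ≤ V.card := by
  refine card_le_card_of_injOn Prod.snd (fun e he => S.snd_mem e (mem_filter.1 he).1) ?_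
  intro e he e' he' hee'
  obtain ⟨he, htop⟩ := mem_filter.1 he
  obtain ⟨he', htop'⟩ := mem_filter.1 he'
  by_contra hne
  refine S.height_ne he he' hne (S.spans_sub_of_snd_eq he rfl)
    (S.spans_sub_of_snd_eq he' hee'.symm) (le_antisymm ?_ (htop e' he' hee'.symm))
  simpa [hee'] using htop' e he hee'

lemma card_filter_not_isUppermost_le (S : IsSweepable V E δ) :
    (E.filter (¬ IsUppermost E δ ·)).card ≤ 3 * V.card := by
  calc (E.filter (¬ IsUppermost E δ ·)).card ≤ (V ×ˢ (univ : Finset (Fin 3))).card := by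
        refine card_le_card_of_forall_subsingleton
          (fun e qk => ∃ f ∈ E, e.2 = f.2 ∧ CreatedAt E δ qk.1 e f ∧
            creationClass qk.1 e f = qk.2) (fun e he => ?_) (fun qk hqk => ?_)
        · obtain ⟨he, hnot⟩ := mem_filter.1 he
          simp only [IsUppermost, not_forall, not_le] at hnot
          obtain ⟨f₀, hf₀, hf₀e, hlt⟩ := hnot
          obtain ⟨f, hf, hfe, hadj⟩ := S.exists_adjacent_of_lt he hf₀ hf₀e hlt
          obtain ⟨q, hq, hcr⟩ := S.exists_createdAt (S.snd_mem e he) hadj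
          exact ⟨(q, creationClass q e f), mem_product.2 ⟨hq, mem_univ _⟩, f, hf, hfe.symm, hcr,
            rfl⟩
        · rintro e ⟨-, f, -, hef, hcr, hk⟩ e' ⟨-, f', -, hef', hcr', hk'⟩
          exact S.eq_of_createdAt (mem_product.1 hqk).1 hcr hef hcr' hef' (hk.trans hk'.symm)
    _ = 3 * V.card := by simp [mul_comm]

theorem card_le (S : IsSweepable V E δ) : E.card ≤ 4 * V.card := by
  have := card_filter_add_card_filter_not (s := E) (IsUppermost E δ)
  linarith [S.card_filter_isUppermost_le, S.card_filter_not_isUppermost_le]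

end IsSweepable

section Reduction

def shear (t : ℝ) : ℝ × ℝ →ₗ[ℝ] ℝ × ℝ where
  toFun p := (p.1 + t * p.2, p.2)
  map_add' p q := by ext <;> simp only [Prod.fst_add, Prod.snd_add]; ring
  map_smul' c p := by
    ext <;> simp only [Prod.smul_fst, Prod.smul_snd, smul_eq_mul, RingHom.id_apply]; ring

lemma shear_injective (t : ℝ) : Function.Injective (shear t) := fun p q h => by
  simp only [shear, LinearMap.coe_mk, AddHom.coe_mk, Prod.mk.injEq] at h
  obtain ⟨h₁, h₂⟩ := h
  exact Prod.ext (by rw [h₂] at h₁; linarith) h₂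

lemma exists_injOn_fst_shear (V : Finset (ℝ × ℝ)) :
    ∃ t : ℝ, Set.InjOn (fun p => (shear t p).1) V := by
  obtain ⟨t, ht⟩ := Infinite.exists_notMem_finset
    (((V ×ˢ V).filter fun ab => ab.1.2 ≠ ab.2.2).image
      fun ab => (ab.2.1 - ab.1.1) / (ab.1.2 - ab.2.2))
  refine ⟨t, fun a ha b hb hab => ?_⟩
  simp only [shear, LinearMap.coe_mk, AddHom.coe_mk] at hab
  by_cases h₂ : a.2 = b.2
  · exact Prod.ext (by rw [h₂] at hab; linarith) h₂
  · refine absurd (mem_image.2 ⟨(a, b), mem_filter.2 ⟨mem_product.2 ⟨ha, hb⟩, h₂⟩, ?_⟩) ht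
    field_simp [sub_ne_zero.2 h₂]
    linarith

lemma exists_pos_separation (s : Finset ℝ) :
    ∃ δ > 0, ∀ a ∈ s, ∀ b ∈ s, |a - b| < 2 * δ → a = b := by
  set D := ((s ×ˢ s).filter fun ab => ab.1 ≠ ab.2).image fun ab => |ab.1 - ab.2|
  have hD : ∀ a ∈ s, ∀ b ∈ s, a ≠ b → |a - b| ∈ D := fun a ha b hb hab =>
    mem_image.2 ⟨(a, b), mem_filter.2 ⟨mem_product.2 ⟨ha, hb⟩, hab⟩, rfl⟩
  rcases D.eq_empty_or_nonempty with hempty | hne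
  · exact ⟨1, one_pos, fun a ha b hb _ => by_contra fun hab => by
      simpa [hempty] using hD a ha b hb hab⟩
  obtain ⟨m, hm, hmin⟩ := D.exists_min_image id hne
  obtain ⟨ab, hab, rfl⟩ := mem_image.1 hm
  have hpos : 0 < |ab.1 - ab.2| := abs_pos.2 (sub_ne_zero.2 (mem_filter.1 hab).2)
  refine ⟨|ab.1 - ab.2| / 2, half_pos hpos, fun a ha b hb hlt => by_contra fun hne => ?_⟩
  have := hmin _ (hD a ha b hb hne)
  simp only [id] at this
  linarith

def orient (e : (ℝ × ℝ) × (ℝ × ℝ)) : (ℝ × ℝ) × (ℝ × ℝ) :=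
  if e.1.1 < e.2.1 then e else e.swap

lemma orient_eq_or (e : (ℝ × ℝ) × (ℝ × ℝ)) : orient e = e ∨ orient e = e.swap := by
  unfold orient
  split_ifs <;> simp

lemma orient_fst_lt {e : (ℝ × ℝ) × (ℝ × ℝ)} (h : e.1.1 ≠ e.2.1) :
    (orient e).1.1 < (orient e).2.1 := by
  unfold orient
  split_ifs with hlt
  · exact hlt
  · exact lt_of_le_of_ne (not_lt.1 hlt) h.symm

def shearEdge (t : ℝ) (e : (ℝ × ℝ) × (ℝ × ℝ)) : (ℝ × ℝ) × (ℝ × ℝ) :=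
  orient (shear t e.1, shear t e.2)

variable {t δ : ℝ} {V : Finset (ℝ × ℝ)} {E : Finset ((ℝ × ℝ) × (ℝ × ℝ))}

lemma openSegment_shearEdge (t : ℝ) (e : (ℝ × ℝ) × (ℝ × ℝ)) :
    openSegment ℝ (shearEdge t e).1 (shearEdge t e).2 = shear t '' openSegment ℝ e.1 e.2 := by
  have := image_openSegment ℝ (shear t).toAffineMap e.1 e.2
  rw [LinearMap.coe_toAffineMap] at this
  rw [this]
  rcases orient_eq_or (shear t e.1, shear t e.2) with h | h <;> rw [shearEdge, h]
  exact openSegment_symm ℝ _ _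

lemma segmentsCross_shearEdge_iff (t : ℝ) (e f : (ℝ × ℝ) × (ℝ × ℝ)) :
    SegmentsCross (shearEdge t e) (shearEdge t f) ↔ SegmentsCross e f := by
  rw [SegmentsCross, SegmentsCross, openSegment_shearEdge, openSegment_shearEdge,
    ← Set.image_inter (shear_injective t), Set.image_nonempty]

lemma shearEdge_mem {e : (ℝ × ℝ) × (ℝ × ℝ)} (he₁ : e.1 ∈ V) (he₂ : e.2 ∈ V) :
    (shearEdge t e).1 ∈ V.image (shear t) ∧ (shearEdge t e).2 ∈ V.image (shear t) := by
  rcases orient_eq_or (shear t e.1, shear t e.2) with h | h <;> rw [shearEdge, h] <;>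
    exact ⟨mem_image_of_mem _ ‹_›, mem_image_of_mem _ ‹_›⟩

lemma IsGeometricGraph.isSweepable_shear (hG : IsGeometricGraph V E)
    (hE : ∀ e ∈ E, ∀ f ∈ E, e ≠ f → ¬ SegmentsCross e f)
    (ht : Set.InjOn (fun p => (shear t p).1) V) (hδ : 0 < δ)
    (hsep : ∀ a ∈ V.image (fun p => (shear t p).1), ∀ b ∈ V.image (fun p => (shear t p).1),
      |a - b| < 2 * δ → a = b) :
    IsSweepable (V.image (shear t)) (E.image (shearEdge t)) δ := by
  refine ⟨?_, ?_, ?_, ?_, ?_, hδ, ?_⟩ <;> simp only [mem_image]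
  · rintro _ ⟨e, he, rfl⟩
    simpa using (shearEdge_mem (hG.fst_mem e he) (hG.snd_mem e he)).1
  · rintro _ ⟨e, he, rfl⟩
    simpa using (shearEdge_mem (hG.fst_mem e he) (hG.snd_mem e he)).2
  · rintro _ ⟨e, he, rfl⟩
    exact orient_fst_lt fun h => hG.fst_ne_snd e he (ht (hG.fst_mem e he) (hG.snd_mem e he) h)
  · rintro _ ⟨e, he, rfl⟩ _ ⟨p, hp, rfl⟩
    rw [openSegment_shearEdge, (shear_injective t).mem_set_image]
    exact hG.not_mem_openSegment e he p hp
  · rintro _ ⟨e, he, rfl⟩ _ ⟨f, hf, rfl⟩ hne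
    rw [segmentsCross_shearEdge_iff]
    exact hE e he f hf fun h => hne (h ▸ rfl)
  · rintro _ ⟨a, ha, rfl⟩ _ ⟨b, hb, rfl⟩ hab
    rw [ht ha hb (hsep _ (mem_image_of_mem _ ha) _ (mem_image_of_mem _ hb) hab)]

theorem IsGeometricGraph.card_le_of_not_segmentsCross (hG : IsGeometricGraph V E)
    (hE : ∀ e ∈ E, ∀ f ∈ E, e ≠ f → ¬ SegmentsCross e f) : E.card ≤ 4 * V.card := by
  obtain ⟨t, ht⟩ := exists_injOn_fst_shear V
  obtain ⟨δ, hδ, hsep⟩ := exists_pos_separation (V.image fun p => (shear t p).1)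
  have hinj : Set.InjOn (shearEdge t) E := fun e he f hf hef => by_contra fun hne =>
    hE e he f hf hne <| by
      rw [← segmentsCross_shearEdge_iff t, SegmentsCross, hef, Set.inter_self,
        openSegment_eq_image']
      exact (Set.nonempty_Ioo.2 zero_lt_one).image _
  calc E.card = (E.image (shearEdge t)).card := (card_image_of_injOn hinj).symm
    _ ≤ 4 * (V.image (shear t)).card := (hG.isSweepable_shear hE ht hδ hsep).card_le
    _ ≤ 4 * V.card := Nat.mul_le_mul_left _ card_image_le

/-- Deleting the first edge of every crossing pair leaves a crossing-free graph. -/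
theorem IsGeometricGraph.card_le_add_card_crossingPairs (hG : IsGeometricGraph V E) :
    E.card ≤ 4 * V.card + (crossingPairs E).card := by
  set R := (crossingPairs E).image Prod.fst
  have hfree : ∀ e ∈ E \ R, ∀ f ∈ E \ R, e ≠ f → ¬ SegmentsCross e f :=
    fun e he f hf hef hcross => (mem_sdiff.1 he).2 <| mem_image.2
      ⟨(e, f), mem_filter.2 ⟨mem_product.2 ⟨(mem_sdiff.1 he).1, (mem_sdiff.1 hf).1⟩, hef, hcross⟩,
        rfl⟩
  calc E.card ≤ (E \ R).card + R.card := card_le_card_sdiff_add_card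
    _ ≤ 4 * V.card + (crossingPairs E).card :=
      add_le_add ((hG.mono sdiff_subset).card_le_of_not_segmentsCross hfree) card_image_le

end Reduction

section Averaging

variable {α ι : Type*} [DecidableEq α]

def binomialWeight (V : Finset α) (p : ℝ) (S : Finset α) : ℝ :=
  p ^ S.card * (1 - p) ^ (V \ S).card

lemma binomialWeight_nonneg (V : Finset α) {p : ℝ} (hp₀ : 0 ≤ p) (hp₁ : p ≤ 1) (S : Finset α) :
    0 ≤ binomialWeight V p S :=
  mul_nonneg (pow_nonneg hp₀ _) (pow_nonneg (sub_nonneg.2 hp₁) _)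

lemma sum_binomialWeight_filter_superset {V A : Finset α} (hA : A ⊆ V) (p : ℝ) :
    ∑ S ∈ V.powerset.filter (A ⊆ ·), binomialWeight V p S = p ^ A.card := by
  have key := Finset.prod_add (fun _ => p) (fun i => if i ∈ A then 0 else 1 - p) V
  simp only [prod_const] at key
  rw [sum_filter]
  convert key.symm using 1
  · refine sum_congr rfl fun S hS => ?_
    split_ifs with hAS
    · rw [binomialWeight,
        prod_congr rfl fun i hi => if_neg fun hiA => (mem_sdiff.1 hi).2 (hAS hiA), prod_const]
    · obtain ⟨i, hiA, hiS⟩ := not_subset.1 hAS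
      rw [prod_eq_zero (f := fun i => if i ∈ A then (0 : ℝ) else 1 - p)
        (mem_sdiff.2 ⟨hA hiA, hiS⟩) (if_pos hiA), mul_zero]
  · rw [prod_congr rfl fun i _ => show p + (if i ∈ A then 0 else 1 - p) = if i ∈ A then p else 1 by
      split_ifs <;> ring, prod_ite_mem, inter_eq_right.2 hA, prod_const]

lemma sum_binomialWeight_mul_card_filter_subset (V : Finset α) (p : ℝ) {I : Finset ι}
    {A : ι → Finset α} {k : ℕ} (hA : ∀ i ∈ I, A i ⊆ V ∧ (A i).card = k) :
    ∑ S ∈ V.powerset, binomialWeight V p S * (I.filter (A · ⊆ S)).card = p ^ k * I.card := by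
  simp only [card_filter, Nat.cast_sum, Nat.cast_ite, Nat.cast_one, Nat.cast_zero, mul_sum,
    mul_ite, mul_one, mul_zero]
  rw [sum_comm, mul_comm (p ^ k), ← nsmul_eq_mul, ← sum_const]
  refine sum_congr rfl fun i hi => ?_
  rw [← (hA i hi).2, ← sum_binomialWeight_filter_superset (hA i hi).1 p, sum_filter]

lemma sum_binomialWeight_mul_card (V : Finset α) (p : ℝ) :
    ∑ S ∈ V.powerset, binomialWeight V p S * S.card = p * V.card := by
  have := sum_binomialWeight_mul_card_filter_subset V p (A := fun v => {v})
    fun v hv => ⟨singleton_subset_iff.2 hv, card_singleton v⟩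
  rw [pow_one] at this
  rw [← this]
  refine sum_congr rfl fun S hS => ?_
  congr 3
  ext v
  simp only [singleton_subset_iff, mem_filter]
  exact ⟨fun hv => ⟨mem_powerset.1 hS hv, hv⟩, And.right⟩

end Averaging

section InducedCounts

variable {X : Type*} [AddCommGroup X] [Module ℝ X] [DecidableEq X] {V : Finset X}
  {E : Finset (X × X)}

lemma IsGeometricGraph.sum_binomialWeight_mul_card_inducedEdges (hG : IsGeometricGraph V E)
    (p : ℝ) : ∑ S ∈ V.powerset, binomialWeight V p S * (inducedEdges E S).card =
      p ^ 2 * E.card := by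
  rw [← sum_binomialWeight_mul_card_filter_subset V p (A := fun e => {e.1, e.2})
    fun e he => ⟨insert_subset (hG.fst_mem e he) (singleton_subset_iff.2 (hG.snd_mem e he)),
      card_pair (hG.fst_ne_snd e he)⟩]
  refine sum_congr rfl fun S _ => ?_
  congr 3
  ext e
  simp only [inducedEdges, mem_filter, insert_subset_iff, singleton_subset_iff]

lemma IsGeometricGraph.sum_binomialWeight_mul_card_crossingPairs (hG : IsGeometricGraph V E)
    (hdisj : ∀ ef ∈ crossingPairs E, Disjoint ({ef.1.1, ef.1.2} : Finset X) {ef.2.1, ef.2.2})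
    (p : ℝ) : ∑ S ∈ V.powerset, binomialWeight V p S * (crossingPairs (inducedEdges E S)).card =
      p ^ 4 * (crossingPairs E).card := by
  rw [← sum_binomialWeight_mul_card_filter_subset V p
    (A := fun ef => {ef.1.1, ef.1.2} ∪ {ef.2.1, ef.2.2}) fun ef hef => ?_]
  · refine sum_congr rfl fun S _ => ?_
    congr 3
    ext ⟨e, f⟩
    simp only [crossingPairs, inducedEdges, mem_filter, mem_product, union_subset_iff,
      insert_subset_iff, singleton_subset_iff]
    tauto
  · obtain ⟨he, hf⟩ := mem_product.1 (mem_filter.1 hef).1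
    refine ⟨union_subset (insert_subset (hG.fst_mem _ he) (singleton_subset_iff.2
      (hG.snd_mem _ he))) (insert_subset (hG.fst_mem _ hf) (singleton_subset_iff.2
      (hG.snd_mem _ hf))), ?_⟩
    rw [card_union_of_disjoint (hdisj ef hef), card_pair (hG.fst_ne_snd _ he),
      card_pair (hG.fst_ne_snd _ hf)]

end InducedCounts

/-- Average `card_le_add_card_crossingPairs` over the subgraphs induced by `S ⊆ V`, weighted by
`binomialWeight V p S` with `p = 5 |V| / |E|`. -/
theorem IsGeometricGraph.crossing_lemma {V : Finset (ℝ × ℝ)} {E : Finset ((ℝ × ℝ) × (ℝ × ℝ))}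
    (hG : IsGeometricGraph V E)
    (hdisj : ∀ ef ∈ crossingPairs E,
      Disjoint ({ef.1.1, ef.1.2} : Finset (ℝ × ℝ)) {ef.2.1, ef.2.2})
    (hE : 5 * (V.card : ℝ) ≤ E.card) :
    (E.card : ℝ) ^ 3 ≤ 125 * V.card ^ 2 * (crossingPairs E).card := by
  rcases E.eq_empty_or_nonempty with rfl | ⟨e₀, he₀⟩
  · simp only [card_empty, Nat.cast_zero]
    exact (zero_pow three_ne_zero).trans_le (by positivity)
  have hn : (0 : ℝ) < V.card := Nat.cast_pos.2 (card_pos.2 ⟨_, hG.fst_mem e₀ he₀⟩)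
  have hm : (0 : ℝ) < E.card := Nat.cast_pos.2 (card_pos.2 ⟨_, he₀⟩)
  set p : ℝ := 5 * V.card / E.card with hp_def
  have hp : 0 < p := by positivity
  have hp₁ : p ≤ 1 := by rw [hp_def, div_le_one hm]; exact hE
  have hpm : p * E.card = 5 * V.card := div_mul_cancel₀ _ hm.ne'
  have hsum : p ^ 2 * E.card ≤ 4 * (p * V.card) + p ^ 4 * (crossingPairs E).card := by
    rw [← hG.sum_binomialWeight_mul_card_inducedEdges, ← sum_binomialWeight_mul_card,
      ← hG.sum_binomialWeight_mul_card_crossingPairs hdisj, mul_sum, ← sum_add_distrib]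
    refine sum_le_sum fun S hS => ?_
    have := (hG.induce (mem_powerset.1 hS)).card_le_add_card_crossingPairs
    have := mul_le_mul_of_nonneg_left (show ((inducedEdges E S).card : ℝ) ≤
      4 * S.card + (crossingPairs (inducedEdges E S)).card by exact_mod_cast this)
      (binomialWeight_nonneg V hp.le hp₁ S)
    linarith
  have hnx : (V.card : ℝ) ≤ p ^ 3 * (crossingPairs E).card := by
    refine le_of_mul_le_mul_left ?_ hp
    nlinarith [hsum, hpm]
  rw [hp_def, div_pow, div_mul_eq_mul_div, le_div_iff₀ (by positivity)] at hnx
  refine le_of_mul_le_mul_left ?_ hn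
  linarith

section Lines

variable {X : Type*} [AddCommGroup X] [Module ℝ X]

lemma exists_injective_affineMap_range_eq {x v : X} (hv : v ≠ 0) :
    ∃ γ : ℝ →ᵃ[ℝ] X, Function.Injective γ ∧ Set.range γ = {y | ∃ t : ℝ, y = x + t • v} := by
  refine ⟨AffineMap.lineMap x (x + v), AffineMap.lineMap_injective ℝ (by simpa using hv), ?_⟩
  ext y
  simp only [Set.mem_range, Set.mem_ofPred_eq, AffineMap.lineMap_apply_module, eq_comm (a := y)]
  refine exists_congr fun t => ?_
  rw [show (1 - t) • x + t • (x + v) = x + t • v by module]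

lemma AffineMap.range_eq_range_lineMap (γ : ℝ →ᵃ[ℝ] X) {s t : ℝ} (hst : s ≠ t) :
    Set.range γ = Set.range (AffineMap.lineMap (k := ℝ) (γ s) (γ t)) := by
  refine Set.Subset.antisymm ?_ ?_
  · rintro _ ⟨u, rfl⟩
    refine ⟨(u - s) / (t - s), ?_⟩
    rw [← AffineMap.apply_lineMap, AffineMap.lineMap_apply_ring']
    congr 1
    field_simp [sub_ne_zero.2 hst.symm]
    ring
  · rintro _ ⟨c, rfl⟩
    exact ⟨_, AffineMap.apply_lineMap γ s t c⟩

lemma range_eq_of_mem_range_inter {γ γ' : ℝ →ᵃ[ℝ] X} {z w : X} (hzw : z ≠ w)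
    (hz : z ∈ Set.range γ ∩ Set.range γ') (hw : w ∈ Set.range γ ∩ Set.range γ') :
    Set.range γ = Set.range γ' := by
  obtain ⟨⟨s, rfl⟩, ⟨s', hs'⟩⟩ := hz
  obtain ⟨⟨t, rfl⟩, ⟨t', ht'⟩⟩ := hw
  rw [γ.range_eq_range_lineMap (s := s) (t := t) (by rintro rfl; exact hzw rfl),
    γ'.range_eq_range_lineMap (s := s') (t := t') (by rintro rfl; exact hzw (hs'.symm.trans ht')),
    hs', ht']

lemma openSegment_eq_image_Ioo (γ : ℝ →ᵃ[ℝ] X) {s t : ℝ} (hst : s < t) :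
    openSegment ℝ (γ s) (γ t) = γ '' Set.Ioo s t := by
  rw [← image_openSegment, openSegment_eq_Ioo hst]

end Lines

section Consecutive

variable {α : Type*} [LinearOrder α]

def consecutivePairs (T : Finset α) : Finset (α × α) :=
  (T ×ˢ T).filter fun st => st.1 < st.2 ∧ ∀ u ∈ T, u ∉ Set.Ioo st.1 st.2

lemma card_le_card_consecutivePairs_add_one (T : Finset α) :
    T.card ≤ (consecutivePairs T).card + 1 := by
  induction T using Finset.induction_on_max with
  | empty => simp
  | insert a T hlt ih =>
    rcases T.eq_empty_or_nonempty with rfl | hT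
    · simp
    obtain ⟨m, hm, hmax⟩ := T.exists_max_image id hT
    have hsub : insert (m, a) (consecutivePairs T) ⊆ consecutivePairs (insert a T) := by
      intro st hst
      simp only [consecutivePairs, mem_insert, mem_filter, mem_product] at hst ⊢
      rcases hst with rfl | ⟨⟨h1, h2⟩, h3, h4⟩
      · refine ⟨⟨Or.inr hm, Or.inl rfl⟩, hlt m hm, ?_⟩
        rintro u (rfl | hu) ⟨h1, h2⟩
        exacts [lt_irrefl _ h2, (hmax u hu).not_gt h1]
      · refine ⟨⟨Or.inr h1, Or.inr h2⟩, h3, ?_⟩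
        rintro u (rfl | hu)
        · exact fun h => (hlt _ h2).not_gt h.2
        · exact h4 u hu
    have hnot : (m, a) ∉ consecutivePairs T := fun h =>
      (hlt a (mem_product.1 (mem_filter.1 h).1).2).false
    have := card_le_card hsub
    rw [card_insert_of_notMem hnot] at this
    rw [card_insert_of_notMem fun h => (hlt a h).false]
    omega

end Consecutive

section EdgesAlong

variable {X : Type*} [AddCommGroup X] [Module ℝ X]

def edgesAlong (P : Finset X) (γ : ℝ →ᵃ[ℝ] X) : Finset (X × X) :=
  (P ×ˢ P).filter fun e =>
    ∃ s t, s < t ∧ e = (γ s, γ t) ∧ ∀ u ∈ Set.Ioo s t, γ u ∉ P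

variable {P : Finset X} {γ : ℝ →ᵃ[ℝ] X} {e f : X × X}

lemma card_filter_mem_range_le (hγ : Function.Injective γ) :
    (P.filter (· ∈ Set.range γ)).card ≤ (edgesAlong P γ).card + 1 := by
  set T := P.preimage γ hγ.injOn
  have hT : (P.filter (· ∈ Set.range γ)).card = T.card := by
    rw [← image_preimage γ P hγ.injOn, card_image_of_injective _ hγ]
  have hcons : (consecutivePairs T).card ≤ (edgesAlong P γ).card := by
    refine card_le_card_of_injOn (Prod.map γ γ) (fun st hst => ?_)
      (Prod.map_injective.2 ⟨hγ, hγ⟩).injOn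
    simp only [consecutivePairs, coe_filter, mem_product, mem_preimage, T, Set.mem_ofPred_eq] at hst
    obtain ⟨⟨hs, ht⟩, hlt, hgap⟩ := hst
    simp only [edgesAlong, coe_filter, mem_product, Set.mem_ofPred_eq, Prod.map_fst, Prod.map_snd]
    exact ⟨⟨hs, ht⟩, st.1, st.2, hlt, rfl, fun u hu hγu => hgap u (by simpa [T] using hγu) hu⟩
  have := card_le_card_consecutivePairs_add_one T
  omega

lemma mem_of_mem_edgesAlong (he : e ∈ edgesAlong P γ) : e.1 ∈ P ∧ e.2 ∈ P :=
  mem_product.1 (mem_filter.1 he).1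

lemma exists_of_mem_edgesAlong (he : e ∈ edgesAlong P γ) :
    ∃ s t, s < t ∧ e = (γ s, γ t) ∧ ∀ u ∈ Set.Ioo s t, γ u ∉ P :=
  (mem_filter.1 he).2

lemma mem_range_of_mem_edgesAlong (he : e ∈ edgesAlong P γ) :
    e.1 ∈ Set.range γ ∧ e.2 ∈ Set.range γ := by
  obtain ⟨s, t, -, rfl, -⟩ := exists_of_mem_edgesAlong he
  exact ⟨⟨s, rfl⟩, ⟨t, rfl⟩⟩

lemma fst_ne_snd_of_mem_edgesAlong (hγ : Function.Injective γ) (he : e ∈ edgesAlong P γ) :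
    e.1 ≠ e.2 := by
  obtain ⟨s, t, hst, rfl, -⟩ := exists_of_mem_edgesAlong he
  exact hγ.ne hst.ne

lemma openSegment_subset_range_of_mem_edgesAlong (he : e ∈ edgesAlong P γ) :
    openSegment ℝ e.1 e.2 ⊆ Set.range γ := by
  obtain ⟨s, t, hst, rfl, -⟩ := exists_of_mem_edgesAlong he
  rw [openSegment_eq_image_Ioo γ hst]
  exact Set.image_subset_range _ _

lemma not_mem_openSegment_of_mem_edgesAlong (he : e ∈ edgesAlong P γ) {p : X} (hp : p ∈ P) :
    p ∉ openSegment ℝ e.1 e.2 := by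
  obtain ⟨s, t, hst, rfl, hgap⟩ := exists_of_mem_edgesAlong he
  rw [openSegment_eq_image_Ioo γ hst]
  rintro ⟨u, hu, rfl⟩
  exact hgap u hu hp

lemma eq_of_mem_edgesAlong_of_segmentsCross (hγ : Function.Injective γ)
    (he : e ∈ edgesAlong P γ) (hf : f ∈ edgesAlong P γ) (hcross : SegmentsCross e f) : e = f := by
  obtain ⟨s, t, hst, rfl, hgap⟩ := exists_of_mem_edgesAlong he
  obtain ⟨s', t', hst', rfl, hgap'⟩ := exists_of_mem_edgesAlong hf
  obtain ⟨_, hz, hz'⟩ := hcross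
  rw [openSegment_eq_image_Ioo γ hst] at hz
  rw [openSegment_eq_image_Ioo γ hst'] at hz'
  obtain ⟨u, ⟨hsu, hut⟩, rfl⟩ := hz
  obtain ⟨u', ⟨hsu', hut'⟩, hu'⟩ := hz'
  obtain rfl := hγ hu'
  have hP := mem_of_mem_edgesAlong he
  have hP' := mem_of_mem_edgesAlong hf
  have h1 : ¬ s < s' := fun h => hgap s' ⟨h, by linarith⟩ hP'.1
  have h2 : ¬ s' < s := fun h => hgap' s ⟨h, by linarith⟩ hP.1
  have h3 : ¬ t < t' := fun h => hgap' t ⟨by linarith, h⟩ hP.2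
  have h4 : ¬ t' < t := fun h => hgap t' ⟨by linarith, h⟩ hP'.2
  rw [le_antisymm (not_lt.1 h2) (not_lt.1 h1), le_antisymm (not_lt.1 h3) (not_lt.1 h4)]

end EdgesAlong

section Arrangement

variable {X : Type*} [AddCommGroup X] [Module ℝ X] {P : Finset X} {L : Finset (Set X)}
  {γ : Set X → ℝ →ᵃ[ℝ] X} {ℓ ℓ' : Set X} {e f : X × X}

def ParametrizesLines (L : Finset (Set X)) (γ : Set X → ℝ →ᵃ[ℝ] X) : Prop :=
  ∀ ℓ ∈ L, Function.Injective (γ ℓ) ∧ Set.range (γ ℓ) = ℓ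

lemma exists_parametrizesLines
    (hL : ∀ ℓ ∈ L, ∃ x v : X, v ≠ 0 ∧ ℓ = {y | ∃ t : ℝ, y = x + t • v}) :
    ∃ γ : Set X → ℝ →ᵃ[ℝ] X, ParametrizesLines L γ := by
  have : ∀ ℓ ∈ L, ∃ γ : ℝ →ᵃ[ℝ] X, Function.Injective γ ∧ Set.range γ = ℓ := by
    intro ℓ hℓ
    obtain ⟨x, v, hv, rfl⟩ := hL ℓ hℓ
    exact exists_injective_affineMap_range_eq hv
  choose! γ hγ using this
  exact ⟨γ, hγ⟩

def arrangementEdges [DecidableEq X] (P : Finset X) (L : Finset (Set X))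
    (γ : Set X → ℝ →ᵃ[ℝ] X) : Finset (X × X) :=
  L.biUnion fun ℓ => edgesAlong P (γ ℓ)

namespace ParametrizesLines

lemma eq_of_mem_inter (hγ : ParametrizesLines L γ) (hℓ : ℓ ∈ L) (hℓ' : ℓ' ∈ L) {z w : X}
    (hzw : z ≠ w) (hz : z ∈ ℓ ∩ ℓ') (hw : w ∈ ℓ ∩ ℓ') : ℓ = ℓ' := by
  rw [← (hγ ℓ hℓ).2, ← (hγ ℓ' hℓ').2] at hz hw
  rw [← (hγ ℓ hℓ).2, ← (hγ ℓ' hℓ').2]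
  exact range_eq_of_mem_range_inter hzw hz hw

lemma mem_line_of_mem_edgesAlong (hγ : ParametrizesLines L γ) (hℓ : ℓ ∈ L)
    (he : e ∈ edgesAlong P (γ ℓ)) : e.1 ∈ ℓ ∧ e.2 ∈ ℓ := by
  simpa only [(hγ ℓ hℓ).2] using mem_range_of_mem_edgesAlong he

lemma openSegment_subset (hγ : ParametrizesLines L γ) (hℓ : ℓ ∈ L)
    (he : e ∈ edgesAlong P (γ ℓ)) : openSegment ℝ e.1 e.2 ⊆ ℓ :=
  (hγ ℓ hℓ).2 ▸ openSegment_subset_range_of_mem_edgesAlong he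

lemma eq_of_mem_edgesAlong (hγ : ParametrizesLines L γ) (hℓ : ℓ ∈ L) (hℓ' : ℓ' ∈ L)
    (he : e ∈ edgesAlong P (γ ℓ)) (he' : e ∈ edgesAlong P (γ ℓ')) : ℓ = ℓ' :=
  hγ.eq_of_mem_inter hℓ hℓ' (fst_ne_snd_of_mem_edgesAlong (hγ ℓ hℓ).1 he)
    ⟨(hγ.mem_line_of_mem_edgesAlong hℓ he).1, (hγ.mem_line_of_mem_edgesAlong hℓ' he').1⟩
    ⟨(hγ.mem_line_of_mem_edgesAlong hℓ he).2, (hγ.mem_line_of_mem_edgesAlong hℓ' he').2⟩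

lemma ne_of_segmentsCross (hγ : ParametrizesLines L γ) (hℓ : ℓ ∈ L)
    (he : e ∈ edgesAlong P (γ ℓ)) (hf : f ∈ edgesAlong P (γ ℓ')) (hcross : SegmentsCross e f)
    (hef : e ≠ f) : ℓ ≠ ℓ' := by
  rintro rfl
  exact hef (eq_of_mem_edgesAlong_of_segmentsCross (hγ ℓ hℓ).1 he hf hcross)

variable [DecidableEq X]

lemma isGeometricGraph (hγ : ParametrizesLines L γ) :
    IsGeometricGraph P (arrangementEdges P L γ) := by
  simp only [arrangementEdges]
  refine ⟨fun e he => ?_, fun e he => ?_, fun e he => ?_, fun e he => ?_⟩ <;>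
    obtain ⟨ℓ, hℓ, he⟩ := mem_biUnion.1 he
  exacts [(mem_of_mem_edgesAlong he).1, (mem_of_mem_edgesAlong he).2,
    fst_ne_snd_of_mem_edgesAlong (hγ ℓ hℓ).1 he,
    fun p hp => not_mem_openSegment_of_mem_edgesAlong he hp]

lemma card_incidences_le (hγ : ParametrizesLines L γ) :
    ((P ×ˢ L).filter fun pl => pl.1 ∈ pl.2).card ≤ (arrangementEdges P L γ).card + L.card := by
  have hdisj : (L : Set (Set X)).PairwiseDisjoint fun ℓ => edgesAlong P (γ ℓ) :=
    fun ℓ hℓ ℓ' hℓ' hne => disjoint_left.2 fun e he he' =>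
      hne (hγ.eq_of_mem_edgesAlong hℓ hℓ' he he')
  rw [card_filter, sum_product_right, arrangementEdges, card_biUnion hdisj, card_eq_sum_ones L,
    ← sum_add_distrib]
  refine sum_le_sum fun ℓ hℓ => ?_
  have := card_filter_mem_range_le (P := P) (hγ ℓ hℓ).1
  rw [(hγ ℓ hℓ).2, card_filter] at this
  simpa using this

lemma card_crossingPairs_le (hγ : ParametrizesLines L γ) :
    (crossingPairs (arrangementEdges P L γ)).card ≤ L.card ^ 2 := by
  rw [sq, ← card_product]
  refine card_le_card_of_forall_subsingleton
    (fun ef ll => ef.1 ∈ edgesAlong P (γ ll.1) ∧ ef.2 ∈ edgesAlong P (γ ll.2))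
    (fun ef hef => ?_) (fun ll hll => ?_)
  · obtain ⟨he, hf⟩ := mem_product.1 (mem_filter.1 hef).1
    obtain ⟨ℓ, hℓ, he⟩ := mem_biUnion.1 he
    obtain ⟨ℓ', hℓ', hf⟩ := mem_biUnion.1 hf
    exact ⟨(ℓ, ℓ'), mem_product.2 ⟨hℓ, hℓ'⟩, he, hf⟩
  · obtain ⟨hℓ, hℓ'⟩ := mem_product.1 hll
    rintro ⟨e, f⟩ ⟨hef, he, hf⟩ ⟨e', f'⟩ ⟨hef', he', hf'⟩
    obtain ⟨hne, z, hze, hzf⟩ := (mem_filter.1 hef).2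
    obtain ⟨hne', z', hze', hzf'⟩ := (mem_filter.1 hef').2
    have hll := hγ.ne_of_segmentsCross hℓ he hf ⟨z, hze, hzf⟩ hne
    have hzz : z = z' := by_contra fun h => hll <| hγ.eq_of_mem_inter hℓ hℓ' h
      ⟨hγ.openSegment_subset hℓ he hze, hγ.openSegment_subset hℓ' hf hzf⟩
      ⟨hγ.openSegment_subset hℓ he' hze', hγ.openSegment_subset hℓ' hf' hzf'⟩
    subst hzz
    exact Prod.ext (eq_of_mem_edgesAlong_of_segmentsCross (hγ _ hℓ).1 he he' ⟨z, hze, hze'⟩)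
      (eq_of_mem_edgesAlong_of_segmentsCross (hγ _ hℓ').1 hf hf' ⟨z, hzf, hzf'⟩)

lemma disjoint_of_mem_crossingPairs (hγ : ParametrizesLines L γ) :
    ∀ ef ∈ crossingPairs (arrangementEdges P L γ),
      Disjoint ({ef.1.1, ef.1.2} : Finset X) {ef.2.1, ef.2.2} := by
  rintro ⟨e, f⟩ hef
  obtain ⟨⟨he, hf⟩, hne, z, hze, hzf⟩ := (mem_filter.1 hef).imp_left mem_product.1
  obtain ⟨ℓ, hℓ, he⟩ := mem_biUnion.1 he
  obtain ⟨ℓ', hℓ', hf⟩ := mem_biUnion.1 hf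
  have hll := hγ.ne_of_segmentsCross hℓ he hf ⟨z, hze, hzf⟩ hne
  have hends : ∀ {u}, u ∈ ({e.1, e.2} : Finset X) → u ∈ P ∧ u ∈ ℓ := fun hu => by
    rcases mem_insert.1 hu with rfl | hu
    · exact ⟨(mem_of_mem_edgesAlong he).1, (hγ.mem_line_of_mem_edgesAlong hℓ he).1⟩
    · rw [mem_singleton.1 hu]
      exact ⟨(mem_of_mem_edgesAlong he).2, (hγ.mem_line_of_mem_edgesAlong hℓ he).2⟩
  have hends' : ∀ {u}, u ∈ ({f.1, f.2} : Finset X) → u ∈ ℓ' := fun hu => by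
    rcases mem_insert.1 hu with rfl | hu
    · exact (hγ.mem_line_of_mem_edgesAlong hℓ' hf).1
    · exact mem_singleton.1 hu ▸ (hγ.mem_line_of_mem_edgesAlong hℓ' hf).2
  refine disjoint_left.2 fun u hu hu' => hll <| hγ.eq_of_mem_inter hℓ hℓ' (z := u) (w := z) ?_
    ⟨(hends hu).2, hends' hu'⟩ ⟨hγ.openSegment_subset hℓ he hze, hγ.openSegment_subset hℓ' hf hzf⟩
  rintro rfl
  exact not_mem_openSegment_of_mem_edgesAlong he (hends hu).1 hze

end ParametrizesLines

end Arrangement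

lemma ncard_incidences_eq {α : Type*} (P : Finset α) (L : Finset (Set α)) :
    {pl : α × Set α | pl.1 ∈ P ∧ pl.2 ∈ L ∧ pl.1 ∈ pl.2}.ncard =
      ((P ×ˢ L).filter fun pl => pl.1 ∈ pl.2).card := by
  rw [← Set.ncard_coe_finset]
  congr 1
  ext pl
  simp [and_assoc]

lemma le_five_mul_rpow_add_of_cube_le {n m e : ℝ} (hn : 0 ≤ n) (hm : 0 ≤ m)
    (h : 5 * n ≤ e → e ^ 3 ≤ 125 * n ^ 2 * m ^ 2) :
    e ≤ 5 * (n ^ ((2 : ℝ) / 3) * m ^ ((2 : ℝ) / 3) + n) := by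
  have hpos : 0 ≤ n ^ ((2 : ℝ) / 3) * m ^ ((2 : ℝ) / 3) := by positivity
  by_cases h5 : 5 * n ≤ e
  · have hcube : ∀ x : ℝ, 0 ≤ x → (x ^ ((2 : ℝ) / 3)) ^ 3 = x ^ 2 := fun x hx => by
      rw [← Real.rpow_natCast, ← Real.rpow_mul hx]
      norm_num
    have : e ≤ 5 * (n ^ ((2 : ℝ) / 3) * m ^ ((2 : ℝ) / 3)) :=
      le_of_pow_le_pow_left₀ three_ne_zero (by positivity) <| by
        rw [mul_pow, mul_pow, hcube n hn, hcube m hm]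
        linarith [h h5]
    linarith
  · linarith

end

/-- **Szemerédi–Trotter theorem** (Theorem 6.8). -/
theorem szemeredi_trotter : ∃ C : ℝ, 0 < C ∧
    ∀ (P : Finset (ℝ × ℝ)) (L : Finset (Set (ℝ × ℝ))),
      (∀ ℓ ∈ L, ∃ (x v : ℝ × ℝ), v ≠ 0 ∧ ℓ = {y | ∃ t : ℝ, y = x + t • v}) →
      ({pl : (ℝ × ℝ) × Set (ℝ × ℝ) | pl.1 ∈ P ∧ pl.2 ∈ L ∧ pl.1 ∈ pl.2}.ncard : ℝ) ≤
        C * ((P.card : ℝ) ^ ((2 : ℝ) / 3) * (L.card : ℝ) ^ ((2 : ℝ) / 3)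
          + (P.card : ℝ) + (L.card : ℝ)) := by
  refine ⟨5, by norm_num, fun P L hL => ?_⟩
  obtain ⟨γ, hγ⟩ := exists_parametrizesLines hL
  have hE : ((arrangementEdges P L γ).card : ℝ) ≤
      5 * (P.card ^ ((2 : ℝ) / 3) * L.card ^ ((2 : ℝ) / 3) + P.card) :=
    le_five_mul_rpow_add_of_cube_le (Nat.cast_nonneg _) (Nat.cast_nonneg _) fun h =>
      (hγ.isGeometricGraph.crossing_lemma hγ.disjoint_of_mem_crossingPairs h).trans <| by
        gcongr
        exact_mod_cast hγ.card_crossingPairs_le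
  have hI : (((P ×ˢ L).filter fun pl => pl.1 ∈ pl.2).card : ℝ) ≤
      (arrangementEdges P L γ).card + L.card := by
    exact_mod_cast hγ.card_incidences_le
  rw [ncard_incidences_eq]
  linarith
end

section
/- Let F be a finite field, let n be a positive integer, and let P ∈ F[x] be a polynomial of degree n. Then the image P(F) = {P(a) : a ∈ F} is either all of F, or has cardinality at most |F| − (|F| − 1)/n (as an inequality of real numbers). -/
/-!
Let `q = |F|` and `K = ⌊(q - 2) / n⌋`. For `1 ≤ k ≤ K` the `k`-th elementary symmetric
function `e_k` of the multiset of values `P(a)`, `a ∈ F`, vanishes. Newton's identities only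
give this up to the factor `k`, which may be zero in `F`, so we lift to the Witt vectors `W(F)`:
for a lift `Q` of `P` and Teichmüller representatives `τ a`, the power sums `∑ₐ Q(τ a)^i` with
`i ≤ K` are divisible by `q`, because `deg Qⁱ ≤ q - 2` and the power sums `∑ₐ (τ a)^j` vanish
for `0 < j < q - 1`. Newton's identities then give `q ∣ k e_k` in `W(F)`, and `k < q` forces
`e_k` to vanish modulo `p`.

Consequently `∏ₐ (X - P(a)) - (X^q - X)` has degree at most `q - 1 - K`. It vanishes at every
value of `P`, and if `P` misses some `b`, it does not vanish at `b`. Hence `|P(F)| ≤ q - 1 - K`,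
which is at most `q - (q - 1) / n`.
-/

open Polynomial Finset

theorem map_multiset_esymm {R S : Type*} [CommRing R] [CommRing S] (f : R →+* S)
    (s : Multiset R) (k : ℕ) : f (s.esymm k) = (s.map f).esymm k := by
  simp only [Multiset.esymm, map_multiset_sum, Multiset.map_map, Multiset.powersetCard_map,
    Function.comp_def, map_multiset_prod]

theorem dvd_mul_esymm_of_dvd_sum_pow {σ R : Type*} [Fintype σ] [CommRing R] (x : σ → R)
    {d : R} {k : ℕ} (h : ∀ i, 0 < i → i ≤ k → d ∣ ∑ s, x s ^ i) :
    d ∣ k * (univ.val.map x).esymm k := by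
  have newton := congrArg (MvPolynomial.aeval x) (MvPolynomial.mul_esymm_eq_sum σ R k)
  simp only [map_mul, map_natCast, map_pow, map_sum, map_neg, map_one,
    MvPolynomial.aeval_esymm_eq_multiset_esymm, MvPolynomial.psum, MvPolynomial.aeval_X]
    at newton
  rw [newton]
  refine dvd_mul_of_dvd_right (dvd_sum fun a ha => dvd_mul_of_dvd_right ?_ _) _
  obtain ⟨hsum, hlt⟩ := mem_filter.mp ha
  rw [HasAntidiagonal.mem_antidiagonal] at hsum
  exact h a.2 (by omega) (by omega)

theorem sum_eval_eq_card_mul_coeff_zero {σ R : Type*} [Fintype σ] [CommRing R] (x : σ → R)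
    {N : ℕ} (h : ∀ j, 0 < j → j ≤ N → ∑ s, x s ^ j = 0) {Q : R[X]}
    (hQ : Q.natDegree ≤ N) :
    ∑ s, Q.eval (x s) = Fintype.card σ * Q.coeff 0 := by
  simp_rw [eval_eq_sum_range' (Nat.lt_succ_of_le hQ)]
  rw [sum_comm, sum_range_succ', sum_eq_zero fun j hj => ?_]
  · simp [mul_comm]
  · rw [← mul_sum, h (j + 1) j.succ_pos (mem_range.mp hj), mul_zero]

theorem eq_zero_of_prime_pow_dvd_mul {R S : Type*} [CommRing R] [IsDomain R] [CommRing S]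
    [NoZeroDivisors S] {p : ℕ} [CharP S p] (hp : p.Prime) (hpR : (p : R) ≠ 0) (π : R →+* S)
    {e k : ℕ} (hk0 : k ≠ 0) (hk : k < p ^ e) {E : R} (h : (p : R) ^ e ∣ k * E) :
    π E = 0 := by
  obtain ⟨s, m, hm, rfl⟩ := Nat.exists_eq_pow_mul_and_not_dvd hk0 p hp.ne_one
  have hse : s < e := by
    have hm0 : 0 < m := Nat.pos_of_ne_zero <| by rintro rfl; exact hm (dvd_zero p)
    have : p ^ s < p ^ e := (Nat.le_mul_of_pos_right _ hm0).trans_lt hk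
    exact (Nat.pow_lt_pow_iff_right hp.one_lt).mp this
  obtain ⟨y, hy⟩ := h
  have hcancel : (m : R) * E = (p : R) ^ (e - s) * y := by
    apply mul_left_cancel₀ (pow_ne_zero s hpR)
    rw [← mul_assoc, ← mul_assoc, ← pow_add, Nat.add_sub_cancel' hse.le]
    exact_mod_cast hy
  have := congrArg π hcancel
  rw [map_mul, map_mul, map_pow, map_natCast, map_natCast, CharP.cast_eq_zero S p,
    zero_pow (by omega), zero_mul] at this
  exact (mul_eq_zero.mp this).resolve_left ((CharP.cast_eq_zero_iff S p m).not.mpr hm)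

namespace WittVector

variable {p : ℕ} [Fact p.Prime]

theorem constantCoeff_teichmuller {R : Type*} [CommRing R] (x : R) :
    constantCoeff (teichmuller p x) = x :=
  teichmuller_coeff_zero p x

variable {F : Type*} [Field F] [Fintype F] [CharP F p]

theorem sum_teichmuller_pow_eq_zero {j : ℕ} (hj : ¬Fintype.card F - 1 ∣ j) :
    ∑ x : F, teichmuller p x ^ j = 0 := by
  obtain ⟨b, hb⟩ : ∃ b : Fˣ, b ^ j ≠ 1 := by
    simpa using (FiniteField.forall_pow_eq_one_iff F j).not.mpr hj
  have hτb : teichmuller p (b : F) ^ j ≠ 1 := fun h => hb <| Units.ext <| by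
    have := congrArg constantCoeff h
    rwa [map_pow, map_one, constantCoeff_teichmuller] at this
  refine eq_zero_of_mul_eq_self_left hτb ?_
  simpa only [mul_sum, ← mul_pow, ← map_mul] using
    b.mulLeft_bijective.sum_comp fun x => teichmuller p x ^ j

end WittVector

open WittVector in
theorem FiniteField.esymm_eval_eq_zero {F : Type*} [Field F] [Fintype F] (P : F[X])
    (hP : 0 < P.natDegree) {k : ℕ} (hk : 0 < k) (hkP : k * P.natDegree < Fintype.card F - 1) :
    (univ.val.map fun a => P.eval a).esymm k = 0 := by
  obtain ⟨p, _⟩ := CharP.exists F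
  obtain ⟨e, hp, hq⟩ := FiniteField.card F p
  have : Fact p.Prime := ⟨hp⟩
  obtain ⟨Q, hQ, hQdeg⟩ := exists_natDegree_eq_of_mem_lifts
    (mem_lifts_of_surjective (constantCoeff_surjective p) P)
  set y : F → WittVector p F := fun x => Q.eval (teichmuller p x)
  have hy : ∀ x, constantCoeff (y x) = P.eval x := fun x => by
    rw [← hQ, eval_map, ← eval₂_at_apply, constantCoeff_teichmuller]
  have hsum (i : ℕ) (hi : 0 < i) (hik : i ≤ k) :
      (Fintype.card F : WittVector p F) ∣ ∑ x, y x ^ i := by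
    simp_rw [y, ← eval_pow]
    rw [sum_eval_eq_card_mul_coeff_zero (N := Fintype.card F - 2) _
      (fun j hj hjN => sum_teichmuller_pow_eq_zero (Nat.not_dvd_of_pos_of_lt hj (by omega)))]
    · exact dvd_mul_right _ _
    · calc (Q ^ i).natDegree ≤ i * P.natDegree := hQdeg ▸ natDegree_pow_le
        _ ≤ k * P.natDegree := Nat.mul_le_mul_right _ hik
        _ ≤ Fintype.card F - 2 := by omega
  have hkq : k < p ^ (e : ℕ) := by
    have := Nat.le_mul_of_pos_right k hP
    omega
  have := eq_zero_of_prime_pow_dvd_mul hp (p_nonzero p F) constantCoeff hk.ne' hkq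
    (by exact_mod_cast hq ▸ dvd_mul_esymm_of_dvd_sum_pow y hsum)
  simpa only [map_multiset_esymm, Multiset.map_map, Function.comp_def, hy] using this

theorem natDegree_prod_X_sub_C_sub_X_pow_le {R : Type*} [CommRing R] (s : Multiset R) {K : ℕ}
    (h : ∀ j, 0 < j → j ≤ K → s.esymm j = 0) :
    ((s.map fun r => X - C r).prod - X ^ Multiset.card s).natDegree ≤
      Multiset.card s - 1 - K := by
  nontriviality R
  rw [natDegree_le_iff_coeff_eq_zero]
  intro N hN
  rw [coeff_sub, coeff_X_pow]
  rcases lt_trichotomy N (Multiset.card s) with hlt | rfl | hgt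
  · rw [Multiset.prod_X_sub_C_coeff s hlt.le, h _ (by omega) (by omega), mul_zero, if_neg hlt.ne,
      sub_zero]
  · simp [Multiset.prod_X_sub_C_coeff, Multiset.esymm]
  · rw [coeff_eq_zero_of_natDegree_lt (by rwa [natDegree_multiset_prod_X_sub_C_eq_card]),
      if_neg hgt.ne', sub_zero]

theorem FiniteField.ncard_range_le_of_esymm_eq_zero {F : Type*} [Field F] [Fintype F]
    {f : F → F} (hf : ¬Function.Surjective f) {K : ℕ} (hK : K < Fintype.card F - 1)
    (h : ∀ j, 0 < j → j ≤ K → (univ.val.map f).esymm j = 0) :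
    (Set.range f).ncard ≤ Fintype.card F - 1 - K := by
  classical
  set w : F[X] := ∏ x, (X - C (f x)) - X ^ Fintype.card F + X
  have hw_deg : w.natDegree ≤ Fintype.card F - 1 - K := by
    refine (natDegree_add_le _ _).trans (max_le ?_ ?_)
    · simpa using natDegree_prod_X_sub_C_sub_X_pow_le _ h
    · rw [natDegree_X]; omega
  have hw_eval (b : F) : w.eval b = ∏ x, (b - f x) := by
    simp [w, eval_prod, FiniteField.pow_card]
  obtain ⟨b, hb⟩ := not_forall.mp hf
  have hw0 : w ≠ 0 := fun h0 => by
    have := hw_eval b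
    rw [h0, eval_zero] at this
    exact prod_ne_zero_iff.mpr (fun x _ => sub_ne_zero.mpr fun e => hb ⟨x, e.symm⟩) this.symm
  rw [Set.ncard_eq_toFinset_card', Set.toFinset_range]
  refine (card_le_degree_of_subset_roots fun a ha => ?_).trans hw_deg
  obtain ⟨x, -, rfl⟩ := mem_image.mp ha
  rw [mem_roots hw0, IsRoot, hw_eval]
  exact prod_eq_zero (mem_univ x) (sub_self _)

theorem cast_sub_one_sub_le_sub_div {q n K : ℕ} (hn : 0 < n) (hK : K < q - 1)
    (hKn : q - 1 ≤ n * (K + 1)) : ((q - 1 - K : ℕ) : ℝ) ≤ q - (q - 1) / n := by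
  have hq : 1 ≤ q := by omega
  have hdiv : ((q : ℝ) - 1) / n ≤ K + 1 := by
    rw [div_le_iff₀ (by positivity)]
    rify [hq] at hKn
    linarith
  rify [hK.le, hq]
  linarith

/-- **Wan's theorem on value sets of polynomials** (Theorem 8.3). -/
theorem wan (F : Type*) [Field F] [Fintype F] (n : ℕ) (hn : 0 < n)
    (P : Polynomial F) (hdeg : P.natDegree = n) :
    Set.range (fun a : F => P.eval a) = Set.univ ∨
      ((Set.range fun a : F => P.eval a).ncard : ℝ) ≤
        (Fintype.card F : ℝ) - ((Fintype.card F : ℝ) - 1) / (n : ℝ) := by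
  rw [or_iff_not_imp_left, Set.range_eq_univ]
  intro hsurj
  subst hdeg
  have hq : 2 ≤ Fintype.card F := Fintype.one_lt_card
  obtain ⟨K, hKn, hKq⟩ : ∃ K, Fintype.card F - 2 < P.natDegree * (K + 1) ∧
      K * P.natDegree ≤ Fintype.card F - 2 :=
    ⟨_, Nat.lt_mul_div_succ _ hn, Nat.div_mul_le_self _ _⟩
  have hK : K < Fintype.card F - 1 := (Nat.le_mul_of_pos_right K hn).trans_lt (by omega)
  have hvalues := FiniteField.ncard_range_le_of_esymm_eq_zero hsurj hK
    fun j hj hjK => FiniteField.esymm_eval_eq_zero P hn hj <|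
      (Nat.mul_le_mul_right P.natDegree hjK).trans_lt (by omega)
  exact (Nat.cast_le.mpr hvalues).trans (cast_sub_one_sub_le_sub_div hn hK (by omega))
end
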